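/- arXiv:1608.03027 — 10 statements merged into one kernel-verified Lean document; each statement's English description precedes it below -/
import Mathlib

section
/- Let m ≥ 5 be odd, h = (m-1)/2, q a prime power, and n = q^m - 1. Then for every integer a with q^{h+1} + 1 ≤ a ≤ q^{h+2}, the q-cyclotomic coset C_a modulo n has cardinality exactly m. -/
/-- The q-cyclotomic coset of a modulo n: {a * q^j mod n : j ≥ 0}. -/
def cyclCoset (q n a : ℕ) : Finset ℕ :=
  (Finset.range n).image (fun j => a * q ^ j % n)

/-- a is the coset leader (smallest element) of its q-cyclotomic coset modulo n. -/
def IsCosetLeader (q n a : ℕ) : Prop :=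
  ∀ j : ℕ, a ≤ a * q ^ j % n

/-!
The coset `C_a` is the orbit of `a` under `x ↦ x q (mod n)`, so its size is the minimal period
`p` of `a`, a divisor of `m` because `q^m ≡ 1 (mod n)`. A proper divisor of the odd number `m` is
at most `m / 3`, so `q^{h+2} ≤ q^{m-p}`; then `0 < a (q^p - 1) ≤ q^{m-p} (q^p - 1) < q^m - 1`,
and `n` cannot divide `a (q^p - 1)`, i.e. `a q^p ≢ a (mod n)`. Hence `p = m`.
-/

open Function

theorem Function.card_image_range_iterate {α : Type*} [DecidableEq α] {f : α → α} {x : α}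
    {N : ℕ} (hx : x ∈ periodicPts f) (hN : minimalPeriod f x ≤ N) :
    ((Finset.range N).image (f^[·] x)).card = minimalPeriod f x := by
  have hpos := minimalPeriod_pos_of_mem_periodicPts hx
  have himage : (Finset.range N).image (f^[·] x) =
      (Finset.range (minimalPeriod f x)).image (f^[·] x) := by
    refine (Finset.Subset.antisymm ?_ (Finset.image_subset_image
      (Finset.range_subset_range.mpr hN)))
    intro y hy
    obtain ⟨j, -, rfl⟩ := Finset.mem_image.mp hy
    exact Finset.mem_image.mpr ⟨j % minimalPeriod f x,
      Finset.mem_range.mpr (Nat.mod_lt _ hpos), iterate_mod_minimalPeriod_eq⟩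
  rw [himage, Finset.card_image_of_injOn, Finset.card_range]
  simpa only [Finset.coe_range] using iterate_injOn_Iio_minimalPeriod

theorem iterate_mul_mod (q n a j : ℕ) :
    (fun x => x * q % n)^[j] (a % n) = a * q ^ j % n := by
  induction j with
  | zero => simp
  | succ j ih => rw [iterate_succ_apply', ih, Nat.mod_mul_mod, pow_succ, mul_assoc]

theorem cyclCoset_eq_image_iterate (q n a : ℕ) :
    cyclCoset q n a = (Finset.range n).image ((fun x => x * q % n)^[·] (a % n)) := by
  simp only [cyclCoset, iterate_mul_mod]

theorem Nat.three_mul_le_of_dvd_of_lt {d m : ℕ} (hm : Odd m) (hdm : d ∣ m) (hlt : d < m) :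
    3 * d ≤ m := by
  obtain ⟨k, rfl⟩ := hdm
  have hk : Odd k := (Nat.odd_mul.mp hm).2
  have hk1 : k ≠ 1 := by rintro rfl; omega
  have hk3 : 3 ≤ k := by obtain ⟨r, rfl⟩ := hk; omega
  nlinarith

theorem not_pow_sub_one_dvd_mul_pow_sub_one {q m d a : ℕ} (hq : 2 ≤ q) (hd : 0 < d)
    (hdm : d < m) (ha0 : 0 < a) (ha : a ≤ q ^ (m - d)) :
    ¬ q ^ m - 1 ∣ a * (q ^ d - 1) := by
  have hqd : 2 ≤ q ^ d := hq.trans (Nat.le_self_pow hd.ne' q)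
  have hqmd : 2 ≤ q ^ (m - d) := hq.trans (Nat.le_self_pow (by omega) q)
  have hqmd_lt : q ^ (m - d) < q ^ m := Nat.pow_lt_pow_right hq (by omega)
  have hsplit : q ^ (m - d) * (q ^ d - 1) = q ^ m - q ^ (m - d) := by
    rw [Nat.mul_sub, mul_one, ← pow_add, Nat.sub_add_cancel hdm.le]
  have hlt : a * (q ^ d - 1) < q ^ m - 1 :=
    calc a * (q ^ d - 1) ≤ q ^ (m - d) * (q ^ d - 1) := Nat.mul_le_mul_right _ ha
      _ < q ^ m - 1 := by omega
  exact fun hdvd => absurd (Nat.le_of_dvd (Nat.mul_pos ha0 (by omega)) hdvd) (by omega)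

theorem minimalPeriod_mul_mod_pow_sub_one {q m a : ℕ} (hq : 2 ≤ q) (hm : Odd m) (hm5 : 5 ≤ m)
    (ha0 : 0 < a) (ha : a ≤ q ^ ((m - 1) / 2 + 2)) :
    minimalPeriod (fun x => x * q % (q ^ m - 1)) (a % (q ^ m - 1)) = m := by
  set n := q ^ m - 1
  set p := minimalPeriod (fun x => x * q % n) (a % n)
  have hperiodic : IsPeriodicPt (fun x => x * q % n) m (a % n) := by
    have hqm : q ^ m ≡ 1 [MOD n] := Nat.modEq_sub (Nat.one_le_pow _ _ (by omega))
    rw [IsPeriodicPt, IsFixedPt, iterate_mul_mod]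
    exact (by simpa using hqm.mul_left a : a * q ^ m ≡ a [MOD n])
  have hpos : 0 < p := hperiodic.minimalPeriod_pos (by omega)
  have hpm : p ∣ m := hperiodic.minimalPeriod_dvd
  refine (Nat.le_of_dvd (by omega) hpm).antisymm (not_lt.mp fun hlt => ?_)
  have h3p := Nat.three_mul_le_of_dvd_of_lt hm hpm hlt
  have hfix : a * q ^ p ≡ a [MOD n] := by
    have h := isPeriodicPt_minimalPeriod (fun x => x * q % n) (a % n)
    rwa [IsPeriodicPt, IsFixedPt, iterate_mul_mod] at h
  have hdvd : n ∣ a * (q ^ p - 1) := by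
    rw [Nat.mul_sub, mul_one]
    exact (Nat.modEq_iff_dvd' (Nat.le_mul_of_pos_right a (Nat.one_le_pow _ _ (by omega)))).mp
      hfix.symm
  exact not_pow_sub_one_dvd_mul_pow_sub_one hq hpos hlt ha0
    (ha.trans (Nat.pow_le_pow_right (by omega) (by omega))) hdvd

theorem stmt_2 (q m : ℕ) (hq : IsPrimePow q) (hm : Odd m) (hm5 : 5 ≤ m) (a : ℕ)
    (ha1 : q ^ ((m - 1) / 2 + 1) + 1 ≤ a) (ha2 : a ≤ q ^ ((m - 1) / 2 + 2)) :
    (cyclCoset q (q ^ m - 1) a).card = m := by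
  have hq2 : 2 ≤ q := hq.two_le
  have hperiod := minimalPeriod_mul_mod_pow_sub_one hq2 hm hm5 (by omega) ha2
  have hmn : m ≤ q ^ m - 1 := by
    have := Nat.lt_two_pow_self (n := m)
    have := Nat.pow_le_pow_left hq2 m
    omega
  rw [cyclCoset_eq_image_iterate, Function.card_image_range_iterate
    (minimalPeriod_pos_iff_mem_periodicPts.mp (by omega)) (by omega), hperiod]
end

section
/- Let m ≥ 5 be odd, h = (m-1)/2, n = q^m - 1, and let a be an integer with q^{h+1} + 1 ≤ a ≤ q^{h+2}, q ∤ a, with q-adic expansion a = Σ_{i=0}^{h+1} a_i q^i. If there exists r with 2 ≤ r ≤ h - 1 such that a_r ≠ 0, then a is the coset leader of C_a and |C_a| = m. -/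
/-!
Multiplying by `q^t` modulo `q^m - 1` rotates the `m` base-`q` digits of `a` cyclically by `t`
places. Since `a < q^(h+2)` has at most `h + 2` digits, a rotation by `t ≤ h - 1` simply enlarges
`a`; a rotation by `t ≥ h` moves the low `m - t` digits to the top. For `t ≥ h + 2` these include
the nonzero last digit, and for `t ∈ {h, h+1}` they include the nonzero digit `a_r` with
`2 ≤ r ≤ h - 1`, so in every case the rotated number exceeds `q^(h+2) > a`. Hence `a` is strictly
smaller than all its proper rotations, which makes it the coset leader of a coset of size `m`.
-/

open Finset

section Digits

variable {q : ℕ} {d : ℕ → ℕ}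

theorem sum_range_mul_pow_lt (hd : ∀ i, d i < q) (k : ℕ) :
    ∑ i ∈ range k, d i * q ^ i < q ^ k := by
  induction k with
  | zero => simp
  | succ k ih =>
    calc ∑ i ∈ range (k + 1), d i * q ^ i
        < q ^ k + d k * q ^ k := by rw [sum_range_succ]; omega
      _ = (d k + 1) * q ^ k := by ring
      _ ≤ q * q ^ k := Nat.mul_le_mul_right _ (hd k)
      _ = q ^ (k + 1) := (pow_succ' q k).symm

theorem sum_range_mul_pow_mod_pow (hd : ∀ i, d i < q) {s k : ℕ} (hs : s ≤ k) :
    (∑ i ∈ range k, d i * q ^ i) % q ^ s = ∑ i ∈ range s, d i * q ^ i := by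
  obtain ⟨c, hc⟩ : q ^ s ∣ ∑ i ∈ Ico s k, d i * q ^ i :=
    dvd_sum fun i hi => (pow_dvd_pow q (mem_Ico.mp hi).1).mul_left (d i)
  rw [← sum_range_add_sum_Ico _ hs, hc, Nat.add_mul_mod_self_left,
    Nat.mod_eq_of_lt (sum_range_mul_pow_lt hd s)]

theorem pow_le_sum_range_mul_pow {r k : ℕ} (hr : r < k) (hdr : d r ≠ 0) :
    q ^ r ≤ ∑ i ∈ range k, d i * q ^ i :=
  calc q ^ r ≤ d r * q ^ r := Nat.le_mul_of_pos_left _ (Nat.pos_of_ne_zero hdr)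
    _ ≤ ∑ i ∈ range k, d i * q ^ i :=
      single_le_sum (f := fun i => d i * q ^ i) (fun _ _ => Nat.zero_le _) (mem_range.mpr hr)

end Digits

section Rotation

variable {q : ℕ}

theorem pow_modEq_pow_mod (hq : 0 < q) (j m : ℕ) : q ^ j ≡ q ^ (j % m) [MOD q ^ m - 1] := by
  have hqm : q ^ m ≡ 1 [MOD q ^ m - 1] := Nat.modEq_sub (Nat.one_le_pow _ _ hq)
  calc q ^ j = (q ^ m) ^ (j / m) * q ^ (j % m) := by rw [← pow_mul, ← pow_add, Nat.div_add_mod]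
    _ ≡ 1 ^ (j / m) * q ^ (j % m) [MOD q ^ m - 1] := (hqm.pow _).mul_right _
    _ = q ^ (j % m) := by rw [one_pow, one_mul]

theorem mul_pow_mod_eq_mul_pow_mod_mod (hq : 0 < q) (a j m : ℕ) :
    a * q ^ j % (q ^ m - 1) = a * q ^ (j % m) % (q ^ m - 1) :=
  (pow_modEq_pow_mod hq j m).mul_left a

/-- `q * a < q^(s+t)` says that the top digit of the `(s + t)`-digit number `a` is zero; multiplying
by `q^t` then moves the low `s` digits of `a` above the high `t` ones. -/
theorem mul_pow_mod_pow_add_sub_one (hq : 2 ≤ q) {a s t : ℕ} (ht : 0 < t)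
    (ha : q * a < q ^ (s + t)) :
    a * q ^ t % (q ^ (s + t) - 1) = a % q ^ s * q ^ t + a / q ^ s := by
  set L := a % q ^ s
  set H := a / q ^ s
  have hL : L + 1 ≤ q ^ s := Nat.mod_lt _ (by positivity)
  have hqH : q * H < q ^ t := by
    have : q * H * q ^ s < q ^ t * q ^ s :=
      calc q * H * q ^ s ≤ q * a := by
            rw [mul_assoc]; exact Nat.mul_le_mul_left _ (Nat.div_mul_le_self a _)
        _ < q ^ t * q ^ s := by rwa [← pow_add, add_comm]
    exact Nat.lt_of_mul_lt_mul_right this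
  have hH : H + 1 < q ^ t := by
    rcases Nat.eq_zero_or_pos H with hH0 | hH0
    · rw [hH0]; exact Nat.one_lt_pow ht.ne' (by omega)
    · nlinarith
  have hpow : q ^ (s + t) = q ^ s * q ^ t := pow_add q s t
  have hLt : (L + 1) * q ^ t ≤ q ^ (s + t) := hpow ▸ Nat.mul_le_mul_right _ hL
  have hsplit : a * q ^ t = (L * q ^ t + H) + (q ^ (s + t) - 1) * H := by
    have hone : q ^ (s + t) - 1 + 1 = q ^ (s + t) :=
      Nat.sub_add_cancel (Nat.one_le_pow _ _ (by omega))
    calc a * q ^ t = (q ^ s * H + L) * q ^ t := by rw [Nat.div_add_mod]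
      _ = H * (q ^ (s + t) - 1 + 1) + L * q ^ t := by rw [hone, hpow]; ring
      _ = (L * q ^ t + H) + (q ^ (s + t) - 1) * H := by ring
  rw [hsplit, Nat.add_mul_mod_self_left, Nat.mod_eq_of_lt (by rw [add_mul] at hLt; omega)]

theorem lt_mul_pow_mod {h a t : ℕ} (hq : 2 ≤ q) (hh : 2 ≤ h) (ha : a < q ^ (h + 2))
    (hqa : ¬ q ∣ a) (hlow : q ^ 2 ≤ a % q ^ h) (ht0 : 0 < t) (ht : t < 2 * h + 1) :
    a < a * q ^ t % (q ^ (2 * h + 1) - 1) := by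
  obtain ⟨s, hst⟩ : ∃ s, 2 * h + 1 = s + t := ⟨2 * h + 1 - t, by omega⟩
  rw [hst]
  have hq1 : 1 ≤ q := by omega
  have hqa' : q * a < q ^ (s + t) :=
    calc q * a < q * q ^ (h + 2) := Nat.mul_lt_mul_of_pos_left ha (by omega)
      _ = q ^ (h + 3) := (pow_succ' q _).symm
      _ ≤ q ^ (s + t) := Nat.pow_le_pow_right hq1 (by omega)
  rw [mul_pow_mod_pow_add_sub_one hq ht0 hqa']
  suffices a < a % q ^ s * q ^ t from this.trans_le (Nat.le_add_right _ _)
  rcases lt_or_ge t h with hth | hth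
  · have hs : a % q ^ s = a :=
      Nat.mod_eq_of_lt (ha.trans_le (Nat.pow_le_pow_right hq1 (by omega)))
    have ha0 : 0 < a := Nat.pos_of_ne_zero fun h0 => hqa (h0 ▸ dvd_zero q)
    rw [hs]
    exact lt_mul_right ha0 (Nat.one_lt_pow ht0.ne' hq)
  · refine ha.trans_le ?_
    rcases le_or_gt (h + 2) t with ht2 | ht2
    · have hL : 1 ≤ a % q ^ s := Nat.pos_of_ne_zero fun h0 =>
        hqa ((dvd_pow_self q (by omega)).trans (Nat.dvd_of_mod_eq_zero h0))
      calc q ^ (h + 2) ≤ q ^ t := Nat.pow_le_pow_right hq1 ht2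
        _ ≤ a % q ^ s * q ^ t := Nat.le_mul_of_pos_left _ hL
    · have hL : q ^ 2 ≤ a % q ^ s :=
        calc q ^ 2 ≤ a % q ^ h := hlow
          _ = a % q ^ s % q ^ h := (Nat.mod_mod_of_dvd a (pow_dvd_pow q (by omega))).symm
          _ ≤ a % q ^ s := Nat.mod_le _ _
      calc q ^ (h + 2) ≤ q ^ (2 + t) := Nat.pow_le_pow_right hq1 (by omega)
        _ = q ^ 2 * q ^ t := pow_add q 2 t
        _ ≤ a % q ^ s * q ^ t := Nat.mul_le_mul_right _ hL

end Rotation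

section Coset

variable {q m a : ℕ}

theorem isCosetLeader_of_lt (hq : 0 < q) (ha : a < q ^ m - 1)
    (hrot : ∀ t, 0 < t → t < m → a < a * q ^ t % (q ^ m - 1)) :
    IsCosetLeader q (q ^ m - 1) a := by
  have hm : 0 < m := Nat.pos_of_ne_zero fun hm => by simp [hm] at ha
  intro j
  rw [mul_pow_mod_eq_mul_pow_mod_mod hq]
  rcases Nat.eq_zero_or_pos (j % m) with hj | hj
  · rw [hj, pow_zero, mul_one, Nat.mod_eq_of_lt ha]
  · exact (hrot _ hj (Nat.mod_lt _ (by omega))).le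

theorem cyclCoset_eq_image_range (hq : 2 ≤ q) :
    cyclCoset q (q ^ m - 1) a = (range m).image (fun j => a * q ^ j % (q ^ m - 1)) := by
  have hm : m ≤ q ^ m - 1 :=
    Nat.le_sub_one_of_lt ((Nat.lt_pow_self (by omega : 1 < 2)).trans_le (Nat.pow_le_pow_left hq m))
  refine Subset.antisymm ?_ (image_subset_image (range_subset_range.mpr hm))
  intro x hx
  obtain ⟨j, hj, rfl⟩ := mem_image.mp hx
  rcases Nat.eq_zero_or_pos m with rfl | hm0
  · simp at hj
  · exact mem_image.mpr ⟨j % m, mem_range.mpr (Nat.mod_lt _ hm0),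
      (mul_pow_mod_eq_mul_pow_mod_mod (by omega) a j m).symm⟩

theorem card_cyclCoset (hq : 2 ≤ q)
    (hrot : ∀ t, 0 < t → t < m → a * q ^ t % (q ^ m - 1) ≠ a % (q ^ m - 1)) :
    (cyclCoset q (q ^ m - 1) a).card = m := by
  have hinj : ∀ i j, i < j → j < m → a * q ^ i % (q ^ m - 1) ≠ a * q ^ j % (q ^ m - 1) := by
    intro i j hij hjm hEq
    apply hrot (i + (m - j)) (by omega) (by omega)
    calc a * q ^ (i + (m - j)) % (q ^ m - 1) = a * q ^ i * q ^ (m - j) % (q ^ m - 1) := by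
          rw [mul_assoc, ← pow_add]
      _ = a * q ^ j * q ^ (m - j) % (q ^ m - 1) := Nat.ModEq.mul_right _ hEq
      _ = a * q ^ (m % m) % (q ^ m - 1) := by
          rw [mul_assoc, ← pow_add, Nat.add_sub_cancel' hjm.le,
            mul_pow_mod_eq_mul_pow_mod_mod (by omega)]
      _ = a % (q ^ m - 1) := by rw [Nat.mod_self, pow_zero, mul_one]
  rw [cyclCoset_eq_image_range hq, card_image_of_injOn, card_range]
  intro i hi j hj hEq
  simp only [coe_range, Set.mem_Iio] at hi hj
  rcases lt_trichotomy i j with hij | hij | hij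
  · exact absurd hEq (hinj i j hij hj)
  · exact hij
  · exact absurd hEq.symm (hinj j i hij hi)

end Coset

theorem stmt_3_general (q m : ℕ) (hq : IsPrimePow q) (hm : Odd m) (hm5 : 5 ≤ m)
    (a : ℕ) (d : ℕ → ℕ)
    (hqa : ¬ q ∣ a) (hdlt : ∀ i, d i < q)
    (hd : a = ∑ i ∈ Finset.range ((m - 1) / 2 + 2), d i * q ^ i)
    (hr : ∃ r, 2 ≤ r ∧ r ≤ (m - 1) / 2 - 1 ∧ d r ≠ 0) :
    IsCosetLeader q (q ^ m - 1) a ∧ (cyclCoset q (q ^ m - 1) a).card = m := by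
  obtain ⟨r, hr2, hrh, hdr⟩ := hr
  obtain ⟨h, rfl⟩ := hm
  have hh : (2 * h + 1 - 1) / 2 = h := by omega
  rw [hh] at hd hrh
  have hq2 : 2 ≤ q := hq.two_le
  have ha : a < q ^ (h + 2) := hd ▸ sum_range_mul_pow_lt hdlt _
  have hlow : q ^ 2 ≤ a % q ^ h := by
    rw [hd, sum_range_mul_pow_mod_pow hdlt (by omega)]
    exact (Nat.pow_le_pow_right (by omega) hr2).trans (pow_le_sum_range_mul_pow (by omega) hdr)
  have hrot t (ht0 : 0 < t) (ht : t < 2 * h + 1) : a < a * q ^ t % (q ^ (2 * h + 1) - 1) :=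
    lt_mul_pow_mod hq2 (by omega) ha hqa hlow ht0 ht
  have han : a < q ^ (2 * h + 1) - 1 :=
    (hrot 1 one_pos (by omega)).trans
      (Nat.mod_lt _ (Nat.sub_pos_of_lt (Nat.one_lt_pow (by omega) hq2)))
  refine ⟨isCosetLeader_of_lt (by omega) han hrot, card_cyclCoset hq2 fun t ht0 ht => ?_⟩
  rw [Nat.mod_eq_of_lt han]
  exact (hrot t ht0 ht).ne'

theorem stmt_3 (q m : ℕ) (hq : IsPrimePow q) (hm : Odd m) (hm5 : 5 ≤ m)
    (a : ℕ) (d : ℕ → ℕ)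
    (ha1 : q ^ ((m - 1) / 2 + 1) + 1 ≤ a) (ha2 : a ≤ q ^ ((m - 1) / 2 + 2))
    (hqa : ¬ q ∣ a) (hdlt : ∀ i, d i < q)
    (hd : a = ∑ i ∈ Finset.range ((m - 1) / 2 + 2), d i * q ^ i)
    (hr : ∃ r, 2 ≤ r ∧ r ≤ (m - 1) / 2 - 1 ∧ d r ≠ 0) :
    IsCosetLeader q (q ^ m - 1) a ∧ (cyclCoset q (q ^ m - 1) a).card = m :=
  stmt_3_general q m hq hm hm5 a d hqa hdlt hd hr
end

section
/- Let m ≥ 5 be odd, h = (m-1)/2, n = q^m - 1. Let a = a_{h+1} q^{h+1} + a_1 q + a_0 with 1 ≤ a_1, a_{h+1} ≤ q-1, 1 ≤ a_0 ≤ q-1 (all other q-adic digits zero). Then a is the coset leader of its q-cyclotomic coset modulo n if and only if a_{h+1} ≤ a_1. -/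
/-!
Multiplication by `q` modulo `q ^ m - 1` rotates the `m` base-`q` digits cyclically, and the
nonzero digits `a0, a1, ah1` of `a` sit at the positions `0, 1, h + 1`. A rotation by `j < h`
just multiplies `a` by `q ^ j`; a rotation by `h + k` with `0 < k ≤ h` puts a nonzero digit at a
position `≥ h + 2`, above every digit of `a`. The rotation by `h` alone is decisive: it carries
`a0, a1, ah1` to the positions `h, h + 1, 0`, so it is `≥ a` exactly when `ah1 ≤ a1`.
-/

lemma natCast_pow_eq_one {q : ℕ} (hq : 0 < q) (m : ℕ) : (q : ZMod (q ^ m - 1)) ^ m = 1 := by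
  have h := ZMod.natCast_self (q ^ m - 1)
  rw [Nat.cast_sub (Nat.one_le_pow m q hq)] at h
  push_cast at h
  exact sub_eq_zero.1 h

lemma isCosetLeader_iff_forall_lt {q n a m : ℕ} (hm : 0 < m) (hqm : (q : ZMod n) ^ m = 1) :
    IsCosetLeader q n a ↔ ∀ j < m, a ≤ a * q ^ j % n := by
  refine ⟨fun h j _ => h j, fun h j => ?_⟩
  have hj : a * q ^ j % n = a * q ^ (j % m) % n := by
    rw [← ZMod.natCast_eq_natCast_iff']
    push_cast
    rw [pow_eq_pow_mod j hqm]
  exact hj ▸ h _ (Nat.mod_lt j hm)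

lemma Nat.mod_eq_of_natCast_eq {n x w : ℕ} (hw : w < n) (h : (x : ZMod n) = w) : x % n = w :=
  ((ZMod.natCast_eq_natCast_iff' x w n).1 h).trans (Nat.mod_eq_of_lt hw)

-- `Q` plays the role of `q ^ h`, and `n + 1 = Q * Q * q` that of `q ^ (2 * h + 1)`.
section Rotation

variable {q Q n ah1 a1 a0 : ℕ} (hq : 2 ≤ q) (hqQ : q * q ≤ Q) (hn : n + 1 = Q * Q * q)
  (hah1 : ah1 < q) (ha1 : a1 < q) (ha0 : a0 < q)
include hq hqQ hah1 ha1 ha0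

lemma digits_add_le : ah1 * (Q * q) + a1 * q + a0 + Q ≤ Q * q * q := by
  have := Nat.mul_le_mul_right (Q * q) hah1
  have := Nat.mul_le_mul_right q ha1
  nlinarith

include hn

lemma digits_mul_mod {R : ℕ} (hR : 1 ≤ R) (hRQ : R * q ≤ Q) :
    (ah1 * (Q * q) + a1 * q + a0) * R % n = (ah1 * (Q * q) + a1 * q + a0) * R := by
  refine Nat.mod_eq_of_lt ?_
  have := Nat.mul_le_mul_right R (digits_add_le hq hqQ hah1 ha1 ha0)
  have := Nat.mul_le_mul_left (Q * q) hRQ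
  nlinarith

lemma digits_mul_mul_mod {S : ℕ} (hS : 1 ≤ S) (hSQ : S * q ≤ Q) :
    (ah1 * (Q * q) + a1 * q + a0) * (Q * S) % n = ah1 * S + a0 * (Q * S) + a1 * (Q * S * q) := by
  refine Nat.mod_eq_of_natCast_eq ?_ ?_
  · have := Nat.mul_le_mul_right (Q * S * q) ha1
    have := Nat.mul_le_mul_right (Q * S) ha0
    have := Nat.mul_le_mul_right S hah1
    have := Nat.mul_le_mul_left (Q * q) hSQ
    have := Nat.mul_le_mul_right S hqQ
    have := Nat.mul_le_mul_right (q * S) hq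
    nlinarith
  · have hqm : ((Q * Q * q : ℕ) : ZMod n) = 1 := by rw [← hn]; simp
    push_cast at hqm ⊢
    linear_combination (ah1 * S : ZMod n) * hqm

lemma digits_mul_mul_self_mod :
    (ah1 * (Q * q) + a1 * q + a0) * (Q * Q) % n = a1 + ah1 * Q + a0 * (Q * Q) := by
  refine Nat.mod_eq_of_natCast_eq ?_ ?_
  · have := Nat.mul_le_mul_right (Q * Q) ha0
    have := Nat.mul_le_mul_right Q hah1
    nlinarith
  · have hqm : ((Q * Q * q : ℕ) : ZMod n) = 1 := by rw [← hn]; simp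
    push_cast at hqm ⊢
    linear_combination (ah1 * Q + a1 : ZMod n) * hqm

end Rotation

lemma digits_le_rotate_iff {q Q ah1 a1 a0 : ℕ} (hq : 2 ≤ q) (hqQ : q * q ≤ Q)
    (hah1 : ah1 < q) (ha0_pos : 0 < a0) (ha0 : a0 < q) :
    ah1 * (Q * q) + a1 * q + a0 ≤ ah1 + a0 * Q + a1 * (Q * q) ↔ ah1 ≤ a1 := by
  have hqQ' : q ≤ Q := by nlinarith
  constructor
  · intro h
    by_contra! hlt
    nlinarith [Nat.mul_le_mul_right (Q * q) hlt]
  · intro hle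
    zify at *
    nlinarith [mul_nonneg (by linarith : (0:ℤ) ≤ a1 - ah1)
        (by nlinarith : (0:ℤ) ≤ Q * q - q),
      mul_nonneg (by linarith : (0:ℤ) ≤ a0 - 1) (by linarith : (0:ℤ) ≤ Q - 1),
      mul_nonneg (by linarith : (0:ℤ) ≤ q - 1 - ah1) (by linarith : (0:ℤ) ≤ q - 1)]

theorem isCosetLeader_iff {q h ah1 a1 a0 : ℕ} (hq : 2 ≤ q) (hh : 2 ≤ h)
    (ha1_pos : 0 < a1) (ha1 : a1 < q) (hah1 : ah1 < q) (ha0_pos : 0 < a0) (ha0 : a0 < q) :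
    IsCosetLeader q (q ^ (2 * h + 1) - 1) (ah1 * q ^ (h + 1) + a1 * q + a0) ↔ ah1 ≤ a1 := by
  rw [isCosetLeader_iff_forall_lt (by omega) (natCast_pow_eq_one (by omega) _)]
  obtain ⟨Q, hQ⟩ : ∃ Q, q ^ h = Q := ⟨_, rfl⟩
  have hqQ : q * q ≤ Q := hQ ▸ sq q ▸ Nat.pow_le_pow_right (by omega) hh
  have hn : q ^ (2 * h + 1) - 1 + 1 = Q * Q * q := by
    rw [Nat.sub_add_cancel (Nat.one_le_pow _ _ (by omega)), pow_succ, two_mul, pow_add, hQ]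
  have hpow_le {j : ℕ} (hj : j < h) : q ^ j * q ≤ Q :=
    hQ ▸ pow_succ q j ▸ Nat.pow_le_pow_right (by omega) hj
  have hAQ := digits_add_le hq hqQ hah1 ha1 ha0
  rw [pow_succ, hQ]
  refine ⟨fun hl => ?_, fun hle j hj => ?_⟩
  · have hrot := hl h (by omega)
    rw [← mul_one (q ^ h), hQ,
      digits_mul_mul_mod hq hqQ hn hah1 ha1 ha0 le_rfl (by nlinarith)] at hrot
    simp only [mul_one] at hrot
    exact (digits_le_rotate_iff hq hqQ hah1 ha0_pos ha0).1 hrot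
  rcases lt_or_ge j h with hjh | hjh
  · rw [digits_mul_mod hq hqQ hn hah1 ha1 ha0 (Nat.one_le_pow _ _ (by omega)) (hpow_le hjh)]
    exact Nat.le_mul_of_pos_right _ (Nat.pow_pos (by omega))
  obtain ⟨k, rfl⟩ : ∃ k, j = h + k := ⟨j - h, by omega⟩
  rcases Nat.lt_or_ge k h with hkh | hkh
  · rw [pow_add, hQ, digits_mul_mul_mod hq hqQ hn hah1 ha1 ha0 (Nat.one_le_pow _ _ (by omega))
      (hpow_le hkh)]
    rcases Nat.eq_zero_or_pos k with rfl | hk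
    · simpa using (digits_le_rotate_iff hq hqQ hah1 ha0_pos ha0).2 hle
    have : Q * q * q ≤ a1 * (Q * q ^ k * q) := by
      calc Q * q * q ≤ Q * q ^ k * q := by gcongr; exact Nat.le_self_pow (by omega) q
      _ ≤ a1 * (Q * q ^ k * q) := Nat.le_mul_of_pos_left _ ha1_pos
    omega
  rw [show k = h by omega, pow_add, hQ, digits_mul_mul_self_mod hq hqQ hn hah1 ha1 ha0]
  have : Q * q * q ≤ a0 * (Q * Q) := by
    calc Q * q * q ≤ Q * Q := by rw [mul_assoc]; gcongr
    _ ≤ a0 * (Q * Q) := Nat.le_mul_of_pos_left _ ha0_pos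
  omega

theorem stmt_4_general (q m : ℕ) (hq : IsPrimePow q) (hm : Odd m) (hm5 : 5 ≤ m)
    (a ah1 a1 a0 : ℕ)
    (hb1 : 1 ≤ a1) (hb1' : a1 ≤ q - 1)
    (hbh' : ah1 ≤ q - 1)
    (hb0 : 1 ≤ a0) (hb0' : a0 ≤ q - 1)
    (hd : a = ah1 * q ^ ((m - 1) / 2 + 1) + a1 * q + a0) :
    IsCosetLeader q (q ^ m - 1) a ↔ ah1 ≤ a1 := by
  obtain ⟨h, rfl⟩ := hm
  have hq2 := hq.two_le
  rw [show (2 * h + 1 - 1) / 2 = h by omega] at hd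
  subst hd
  exact isCosetLeader_iff hq2 (by omega) hb1 (by omega) (by omega) hb0 (by omega)

theorem stmt_4 (q m : ℕ) (hq : IsPrimePow q) (hm : Odd m) (hm5 : 5 ≤ m)
    (a ah1 a1 a0 : ℕ)
    (hb1 : 1 ≤ a1) (hb1' : a1 ≤ q - 1)
    (hbh : 1 ≤ ah1) (hbh' : ah1 ≤ q - 1)
    (hb0 : 1 ≤ a0) (hb0' : a0 ≤ q - 1)
    (hd : a = ah1 * q ^ ((m - 1) / 2 + 1) + a1 * q + a0) :
    IsCosetLeader q (q ^ m - 1) a ↔ ah1 ≤ a1 :=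
  stmt_4_general q m hq hm hm5 a ah1 a1 a0 hb1 hb1' hbh' hb0 hb0' hd
end

section
/- Let m ≥ 5 be odd, h = (m-1)/2, n = q^m - 1. Let a = a_{h+1} q^{h+1} + a_h q^h + a_0 with 1 ≤ a_0, a_h, a_{h+1} ≤ q-1 (all other digits zero). Then a is the coset leader of its q-cyclotomic coset modulo n if and only if a_{h+1} < a_0. -/
lemma mod_eq_aux (n x c v : ℕ) (hx : x = v + c * n) (hv : v < n) : x % n = v := by
  subst hx
  rw [Nat.add_mul_mod_self_right, Nat.mod_eq_of_lt hv]

lemma digit_bound (q M e1 e2 e3 b1 b2 b3 : ℕ) (hq : 2 ≤ q)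
    (h32 : e3 < e2) (h21 : e2 < e1) (h31 : e3 + 3 ≤ e1) (h1M : e1 < M)
    (hb1 : b1 + 1 ≤ q) (hb2 : b2 + 1 ≤ q) (hb3 : b3 + 1 ≤ q) :
    b1 * q ^ e1 + b2 * q ^ e2 + b3 * q ^ e3 + 2 ≤ q ^ M := by
  have hq0 : 0 < q := by omega
  have hX3 : 1 ≤ q ^ e3 := Nat.one_le_pow _ _ hq0
  have hX2 : 1 ≤ q ^ e2 := Nat.one_le_pow _ _ hq0
  have p32 : q * q ^ e3 ≤ q ^ e2 := by
    calc q * q ^ e3 = q ^ (e3 + 1) := by ring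
    _ ≤ q ^ e2 := Nat.pow_le_pow_right hq0 h32
  have p21 : q * q ^ e2 ≤ q ^ e1 := by
    calc q * q ^ e2 = q ^ (e2 + 1) := by ring
    _ ≤ q ^ e1 := Nat.pow_le_pow_right hq0 h21
  have p1M : q * q ^ e1 ≤ q ^ M := by
    calc q * q ^ e1 = q ^ (e1 + 1) := by ring
    _ ≤ q ^ M := Nat.pow_le_pow_right hq0 h1M
  have f1 : (b1 + 1) * q ^ e1 ≤ q * q ^ e1 := mul_le_mul_left hb1 _
  have f2 : (b2 + 1) * q ^ e2 ≤ q * q ^ e2 := mul_le_mul_left hb2 _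
  have f3 : (b3 + 1) * q ^ e3 ≤ q * q ^ e3 := mul_le_mul_left hb3 _
  have key : b2 * q ^ e2 + b3 * q ^ e3 + 2 ≤ q ^ e1 := by
    rcases le_or_gt (e3 + 2) e2 with hA | hB
    · have pA : q * (q * q ^ e3) ≤ q ^ e2 := by
        calc q * (q * q ^ e3) = q ^ (e3 + 2) := by ring
        _ ≤ q ^ e2 := Nat.pow_le_pow_right hq0 hA
      have g1 : 2 * (q * q ^ e3) ≤ q * (q * q ^ e3) := mul_le_mul_left hq _
      have g2 : 2 * q ^ e3 ≤ q * q ^ e3 := mul_le_mul_left hq _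
      nlinarith [f3, pA, g1, g2, hX3, f2, p21]
    · have pB : q * (q * q ^ e2) ≤ q ^ e1 := by
        calc q * (q * q ^ e2) = q ^ (e2 + 2) := by ring
        _ ≤ q ^ e1 := Nat.pow_le_pow_right hq0 (by omega)
      have g1 : 2 * (q * q ^ e2) ≤ q * (q * q ^ e2) := mul_le_mul_left hq _
      have g2 : 2 * q ^ e2 ≤ q * q ^ e2 := mul_le_mul_left hq _
      nlinarith [f3, p32, hX3, f2, pB, g1, g2, hX2]
  linarith [f1, key, p1M]

theorem stmt_5 (q m : ℕ) (hq : IsPrimePow q) (hm : Odd m) (hm5 : 5 ≤ m)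
    (a ah1 ah a0 : ℕ)
    (hbh1 : 1 ≤ ah1) (hbh1' : ah1 ≤ q - 1)
    (hbh : 1 ≤ ah) (hbh' : ah ≤ q - 1)
    (hb0 : 1 ≤ a0) (hb0' : a0 ≤ q - 1)
    (hd : a = ah1 * q ^ ((m - 1) / 2 + 1) + ah * q ^ ((m - 1) / 2) + a0) :
    IsCosetLeader q (q ^ m - 1) a ↔ ah1 < a0 := by
  have hq2 : 2 ≤ q := hq.two_le
  have hq0 : 0 < q := by omega
  obtain ⟨k, hk⟩ := hm
  subst hk
  have hk2 : 2 ≤ k := by omega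
  have hh : (2 * k + 1 - 1) / 2 = k := by omega
  rw [hh] at hd
  have hb1q : ah1 + 1 ≤ q := by omega
  have hbq : ah + 1 ≤ q := by omega
  have hb0q : a0 + 1 ≤ q := by omega
  set n := q ^ (2 * k + 1) - 1 with hn
  have hpow1 : 1 ≤ q ^ (2 * k + 1) := Nat.one_le_pow _ _ hq0
  have hqm : q ^ (2 * k + 1) = n + 1 := by omega
  -- basic power facts
  have hq_k : q ≤ q ^ k := by
    calc q = q ^ 1 := (pow_one q).symm
    _ ≤ q ^ k := Nat.pow_le_pow_right hq0 (by omega)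
  have e1 : q * q ^ k = q ^ (k + 1) := by ring
  have e2 : q * q ^ (k + 1) = q ^ (k + 2) := by ring
  have fah : (ah + 1) * q ^ k ≤ q * q ^ k := mul_le_mul_left hbq _
  have fah1 : (ah1 + 1) * q ^ (k + 1) ≤ q * q ^ (k + 1) := mul_le_mul_left hb1q _
  have ha2 : a + 1 ≤ q ^ (k + 2) := by
    rw [hd]; linarith
  -- a is less than n
  have han : a < n := by
    have hb := digit_bound q (2 * k + 1) (k + 1) k 0 ah1 ah a0 hq2 (by omega) (by omega)
      (by omega) (by omega) hb1q hbq hb0q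
    simp only [pow_zero, mul_one] at hb
    linarith [hqm]
  -- the key reduction modulo m for exponents
  have h1 : q ^ (2 * k + 1) ≡ 1 [MOD n] := by
    show q ^ (2 * k + 1) % n = 1 % n
    rw [hqm, Nat.add_mod_left]
  have key : ∀ j : ℕ, a * q ^ j % n = a * q ^ (j % (2 * k + 1)) % n := by
    intro j
    have h4 : q ^ j = (q ^ (2 * k + 1)) ^ (j / (2 * k + 1)) * q ^ (j % (2 * k + 1)) := by
      rw [← pow_mul, ← pow_add, Nat.div_add_mod]
    have h5 := h1.pow (j / (2 * k + 1))
    rw [one_pow] at h5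
    have h6 := h5.mul_right (q ^ (j % (2 * k + 1)))
    rw [one_mul] at h6
    rw [h4] at *
    exact h6.mul_left a
  -- the value at shift k+1
  have hvk1 : a * q ^ (k + 1) % n = ah1 * q + ah + a0 * q ^ (k + 1) := by
    have heq : a * q ^ (k + 1) = (ah1 * q + ah + a0 * q ^ (k + 1)) + (ah1 * q + ah) * n := by
      have ex : a * q ^ (k + 1) = ah1 * (q ^ (2 * k + 1) * q) + ah * q ^ (2 * k + 1)
          + a0 * q ^ (k + 1) := by rw [hd]; ring
      rw [hqm] at ex
      rw [ex]; ring
    have hlt : ah1 * q + ah + a0 * q ^ (k + 1) < n := by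
      have hb := digit_bound q (2 * k + 1) (k + 1) 1 0 a0 ah1 ah hq2 (by omega) (by omega)
        (by omega) (by omega) hb0q hb1q hbq
      simp only [pow_zero, pow_one, mul_one] at hb
      linarith [hqm]
    exact mod_eq_aux _ _ _ _ heq hlt
  constructor
  · intro hL
    by_contra hcon
    push_neg at hcon
    have hle : a ≤ a * q ^ (k + 1) % n := hL (k + 1)
    rw [hvk1, hd] at hle
    have g1 : a0 * q ^ (k + 1) ≤ ah1 * q ^ (k + 1) := mul_le_mul_left hcon _
    have g2 : (ah1 + 1) * q ≤ q * q := mul_le_mul_left hb1q _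
    have g3 : q * q = q ^ 2 := by ring
    have g4 : q ^ 2 ≤ q ^ k := Nat.pow_le_pow_right hq0 (by omega)
    have g5 : 1 * q ^ k ≤ ah * q ^ k := mul_le_mul_left hbh _
    linarith
  · intro h0
    show ∀ j : ℕ, a ≤ a * q ^ j % n
    intro j
    have ht : j % (2 * k + 1) < 2 * k + 1 := Nat.mod_lt _ (by omega)
    rw [key j]
    set t := j % (2 * k + 1) with htdef
    rcases Nat.lt_or_ge t (k + 1) with hc1 | hc1
    · rcases Nat.eq_zero_or_pos t with hc2 | hc2
      · rw [hc2, pow_zero, mul_one, Nat.mod_eq_of_lt han]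
      · rcases Nat.lt_or_ge t k with hc3 | hc3
        · -- 1 ≤ t < k
          have heq : a * q ^ t =
              (ah1 * q ^ (k + 1 + t) + ah * q ^ (k + t) + a0 * q ^ t) + 0 * n := by
            rw [hd]; ring
          have hlt : ah1 * q ^ (k + 1 + t) + ah * q ^ (k + t) + a0 * q ^ t < n := by
            have hb := digit_bound q (2 * k + 1) (k + 1 + t) (k + t) t ah1 ah a0 hq2
              (by omega) (by omega) (by omega) (by omega) hb1q hbq hb0q
            linarith [hqm]
          rw [mod_eq_aux _ _ _ _ heq hlt]
          have p1 : q ^ (k + 2) ≤ q ^ (k + 1 + t) := Nat.pow_le_pow_right hq0 (by omega)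
          have p2 : 1 * q ^ (k + 1 + t) ≤ ah1 * q ^ (k + 1 + t) := mul_le_mul_left hbh1 _
          linarith [ha2, Nat.zero_le (ah * q ^ (k + t)), Nat.zero_le (a0 * q ^ t)]
        · -- t = k
          have hck : t = k := by omega
          have heq : a * q ^ k = (ah1 + ah * q ^ (2 * k) + a0 * q ^ k) + ah1 * n := by
            have ex : a * q ^ k = ah1 * q ^ (2 * k + 1) + ah * q ^ (2 * k) + a0 * q ^ k := by
              rw [hd]; ring
            rw [hqm] at ex
            rw [ex]; ring
          have hlt : ah1 + ah * q ^ (2 * k) + a0 * q ^ k < n := by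
            have hb := digit_bound q (2 * k + 1) (2 * k) k 0 ah a0 ah1 hq2 (by omega)
              (by omega) (by omega) (by omega) hbq hb0q hb1q
            simp only [pow_zero, mul_one] at hb
            linarith [hqm]
          rw [hck, mod_eq_aux _ _ _ _ heq hlt]
          have p1 : q ^ (k + 2) ≤ q ^ (2 * k) := Nat.pow_le_pow_right hq0 (by omega)
          have p2 : 1 * q ^ (2 * k) ≤ ah * q ^ (2 * k) := mul_le_mul_left hbh _
          linarith [ha2, Nat.zero_le (a0 * q ^ k), Nat.zero_le ah1]
    · rcases Nat.eq_or_lt_of_le hc1 with hc2 | hc2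
      · -- t = k + 1
        rw [← hc2, hvk1, hd]
        have g : (ah1 + 1) * q ^ (k + 1) ≤ a0 * q ^ (k + 1) := mul_le_mul_left (by omega) _
        linarith [Nat.zero_le (ah1 * q), Nat.zero_le ah]
      · -- k + 2 ≤ t ≤ 2k
        obtain ⟨u, hu⟩ : ∃ u, t = u + (k + 1) := ⟨t - (k + 1), by omega⟩
        have hu1 : 1 ≤ u := by omega
        have hu2 : u ≤ k - 1 := by omega
        have heq : a * q ^ t =
            (ah1 * q ^ (u + 1) + ah * q ^ u + a0 * q ^ (k + 1 + u))
              + (ah1 * q ^ (u + 1) + ah * q ^ u) * n := by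
          have ex : a * q ^ t = ah1 * (q ^ (2 * k + 1) * q ^ (u + 1))
              + ah * (q ^ (2 * k + 1) * q ^ u) + a0 * q ^ (k + 1 + u) := by
            rw [hd, hu]; ring
          rw [hqm] at ex
          rw [ex]; ring
        have hlt : ah1 * q ^ (u + 1) + ah * q ^ u + a0 * q ^ (k + 1 + u) < n := by
          have hb := digit_bound q (2 * k + 1) (k + 1 + u) (u + 1) u a0 ah1 ah hq2
            (by omega) (by omega) (by omega) (by omega) hb0q hb1q hbq
          linarith [hqm]
        rw [mod_eq_aux _ _ _ _ heq hlt]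
        have p1 : q ^ (k + 2) ≤ q ^ (k + 1 + u) := Nat.pow_le_pow_right hq0 (by omega)
        have p2 : 1 * q ^ (k + 1 + u) ≤ a0 * q ^ (k + 1 + u) := mul_le_mul_left hb0 _
        linarith [ha2, Nat.zero_le (ah1 * q ^ (u + 1)), Nat.zero_le (ah * q ^ u)]
end

section
/- Let m ≥ 5 be odd, h = (m-1)/2, n = q^m - 1, and a = a_{h+1} q^{h+1} + a_0 with 1 ≤ a_0, a_{h+1} ≤ q-1. Then a is not the coset leader of its q-cyclotomic coset modulo n; in fact a_0 q^h + a_{h+1} lies in C_a and is smaller than a. -/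
theorem mul_pow_add_mul_pow_eq {q : ℕ} (hq : 0 < q) (c d k l : ℕ) :
    (c * q ^ k + d) * q ^ l = c * (q ^ (k + l) - 1) + (d * q ^ l + c) := by
  have : 1 ≤ q ^ (k + l) := Nat.one_le_pow _ _ hq
  zify [this]
  ring

theorem mul_pow_add_mul_pow_mod {q c d k l m : ℕ} (hq : 0 < q) (hklm : k + l = m)
    (hlt : d * q ^ l + c < q ^ m - 1) :
    (c * q ^ k + d) * q ^ l % (q ^ m - 1) = d * q ^ l + c := by
  subst hklm
  rw [mul_pow_add_mul_pow_eq hq, Nat.mul_add_mod_self_right, Nat.mod_eq_of_lt hlt]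

theorem mul_pow_add_lt_pow_succ {q c d l : ℕ} (hd : d < q) (hc : c < q ^ l) :
    d * q ^ l + c < q ^ (l + 1) :=
  calc d * q ^ l + c < (d + 1) * q ^ l := by rw [add_one_mul]; omega
    _ ≤ q * q ^ l := Nat.mul_le_mul_right _ hd
    _ = q ^ (l + 1) := (pow_succ' q l).symm

theorem mem_cyclCoset_of_lt {q n a j : ℕ} (hj : j < n) : a * q ^ j % n ∈ cyclCoset q n a :=
  Finset.mem_image_of_mem _ (Finset.mem_range.2 hj)

theorem not_isCosetLeader_of_mod_lt {q n a j : ℕ} (hj : a * q ^ j % n < a) :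
    ¬ IsCosetLeader q n a :=
  fun hlead => (hlead j).not_gt hj

theorem stmt_6_general (q m : ℕ) (hm : Odd m) (hm5 : 5 ≤ m)
    (a ah1 a0 : ℕ)
    (hbh : 1 ≤ ah1) (hbh' : ah1 ≤ q - 1)
    (hb0' : a0 ≤ q - 1)
    (hd : a = ah1 * q ^ ((m - 1) / 2 + 1) + a0) :
    ¬ IsCosetLeader q (q ^ m - 1) a ∧
    a0 * q ^ ((m - 1) / 2) + ah1 ∈ cyclCoset q (q ^ m - 1) a ∧
    a0 * q ^ ((m - 1) / 2) + ah1 < a := by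
  set h := (m - 1) / 2
  have hq : 2 ≤ q := by omega
  have hm_eq : h + 1 + h = m := by obtain ⟨k, rfl⟩ := hm; omega
  have hrot_lt : a0 * q ^ h + ah1 < q ^ (h + 1) :=
    mul_pow_add_lt_pow_succ (by omega)
      ((show ah1 < q by omega).trans_le (Nat.le_self_pow (by omega) q))
  have hpow_le : q ^ (h + 1) ≤ q ^ m - 1 :=
    Nat.le_sub_one_of_lt (Nat.pow_lt_pow_right hq (by omega))
  have hmod : a * q ^ h % (q ^ m - 1) = a0 * q ^ h + ah1 := by
    rw [hd]
    exact mul_pow_add_mul_pow_mod (by omega) hm_eq (hrot_lt.trans_le hpow_le)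
  have hlt : a0 * q ^ h + ah1 < a :=
    hrot_lt.trans_le (hd ▸ le_add_right (Nat.le_mul_of_pos_left _ hbh))
  have hh_lt : h < q ^ m - 1 :=
    ((Nat.lt_succ_self h).trans (Nat.lt_pow_self hq)).trans_le hpow_le
  exact ⟨not_isCosetLeader_of_mod_lt (hmod ▸ hlt), hmod ▸ mem_cyclCoset_of_lt hh_lt, hlt⟩

theorem stmt_6 (q m : ℕ) (hq : IsPrimePow q) (hm : Odd m) (hm5 : 5 ≤ m)
    (a ah1 a0 : ℕ)
    (hbh : 1 ≤ ah1) (hbh' : ah1 ≤ q - 1)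
    (hb0 : 1 ≤ a0) (hb0' : a0 ≤ q - 1)
    (hd : a = ah1 * q ^ ((m - 1) / 2 + 1) + a0) :
    ¬ IsCosetLeader q (q ^ m - 1) a ∧
    a0 * q ^ ((m - 1) / 2) + ah1 ∈ cyclCoset q (q ^ m - 1) a ∧
    a0 * q ^ ((m - 1) / 2) + ah1 < a :=
  stmt_6_general q m hm hm5 a ah1 a0 hbh hbh' hb0' hd
end

section
/- Let n = q^m - 1 with m odd, m ≥ 3. The smallest positive integer a with q ∤ a that is not the coset leader of its q-cyclotomic coset modulo n is a = q^{(m+1)/2} + 1. -/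
lemma pow_modeq_aux (q m j : ℕ) (hq : 2 ≤ q) (hm : 1 ≤ m) :
    q ^ j ≡ q ^ (j % m) [MOD q ^ m - 1] := by
  have hqm : 1 ≤ q ^ m := Nat.one_le_pow _ _ (by omega)
  have h1 : q ^ m ≡ 1 [MOD q ^ m - 1] := by
    obtain ⟨n, hn⟩ : ∃ n, q ^ m = n + 1 := ⟨q ^ m - 1, by omega⟩
    rw [hn]
    simp [Nat.ModEq, Nat.add_mod_left]
  calc q ^ j = (q ^ m) ^ (j / m) * q ^ (j % m) := by
        conv_lhs => rw [← Nat.div_add_mod j m]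
        rw [pow_add, pow_mul]
    _ ≡ 1 ^ (j / m) * q ^ (j % m) [MOD q ^ m - 1] := (h1.pow _).mul_right _
    _ = q ^ (j % m) := by rw [one_pow, one_mul]

lemma leader_of_small (q m t a : ℕ) (hq : 2 ≤ q) (ht : 2 * t = m + 1) (ht2 : 2 ≤ t)
    (hqa : ¬ q ∣ a) (hat : a < q ^ t) :
    IsCosetLeader q (q ^ m - 1) a := by
  intro j
  have hm1 : 1 ≤ m := by omega
  have ha : 0 < a := by
    rcases Nat.eq_zero_or_pos a with h | h
    · exact absurd (h ▸ dvd_zero q) hqa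
    · exact h
  set n := q ^ m - 1 with hn
  have hqm1 : 1 ≤ q ^ m := Nat.one_le_pow _ _ (by omega)
  have hqm : q ^ m = n + 1 := by omega
  have hme : a * q ^ j % n = a * q ^ (j % m) % n :=
    (pow_modeq_aux q m j hq hm1).mul_left a
  rw [hme]
  set j' := j % m with hj'def
  have hj' : j' < m := Nat.mod_lt _ (by omega)
  clear_value j'
  by_cases h1 : j' + t ≤ m
  · -- no wraparound: a * q^{j'} < n
    have e0 : a * q ^ j' ≤ a * q ^ (m - t) :=
      Nat.mul_le_mul_left a (Nat.pow_le_pow_right (by omega) (by omega))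
    have e1 : a * q ^ (m - t) + q ^ (m - t) ≤ q ^ m := by
      have h7 := Nat.mul_le_mul_right (q ^ (m - t)) (by omega : a + 1 ≤ q ^ t)
      rw [add_mul, one_mul, ← pow_add] at h7
      have h8 : t + (m - t) = m := by omega
      rwa [h8] at h7
    have e3 : 2 ≤ q ^ (m - t) := le_trans hq (Nat.le_self_pow (by omega) q)
    have hlt : a * q ^ j' < n := by omega
    rw [Nat.mod_eq_of_lt hlt]
    exact Nat.le_mul_of_pos_right a (pow_pos (by omega) j')
  · -- wraparound
    set i := m - j' with hidef
    have hi1 : 1 ≤ i := by omega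
    have hij : i + j' = m := by omega
    have hjt : t ≤ j' := by omega
    set v := a % q ^ i with hvdef
    set u := a / q ^ i with hudef
    have hdiv : q ^ i * u + v = a := Nat.div_add_mod a (q ^ i)
    clear_value i
    have hv : 0 < v := by
      rcases Nat.eq_zero_or_pos v with h | h
      · exfalso
        exact hqa (dvd_trans (dvd_pow_self q (by omega : i ≠ 0))
          (Nat.dvd_of_mod_eq_zero h))
      · exact h
    have hv' : v < q ^ i := Nat.mod_lt _ (pow_pos (by omega) i)
    have hu : u < q ^ (t - i) := by
      have h5 : q ^ i * u < q ^ i * q ^ (t - i) := by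
        rw [← pow_add]
        have h6 : i + (t - i) = t := by omega
        rw [h6]
        omega
      exact Nat.lt_of_mul_lt_mul_left h5
    clear_value u v
    have hAC : q ^ (t - i) < q ^ j' := Nat.pow_lt_pow_right (by omega) (by omega)
    have hBC : q ^ i * q ^ j' = q ^ m := by rw [← pow_add, hij]
    have h5 : v * q ^ j' + q ^ j' ≤ q ^ i * q ^ j' := by
      have := Nat.mul_le_mul_right (q ^ j') (by omega : v + 1 ≤ q ^ i)
      rw [add_mul, one_mul] at this
      exact this
    have hblt : u + v * q ^ j' < n := by omega
    have e : a * q ^ j' = u * q ^ m + v * q ^ j' := by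
      have h6 : (q ^ i * u + v) * q ^ j' = u * (q ^ i * q ^ j') + v * q ^ j' := by ring
      rw [← hdiv, h6, hBC]
    have h1' : q ^ m ≡ 1 [MOD n] := by
      have := pow_modeq_aux q m m hq hm1
      simpa [Nat.mod_self] using this
    have me2 : u * q ^ m + v * q ^ j' ≡ u * 1 + v * q ^ j' [MOD n] :=
      (h1'.mul_left u).add_right _
    have efin : a * q ^ j' % n = u + v * q ^ j' := by
      rw [e]
      have : (u * q ^ m + v * q ^ j') % n = (u * 1 + v * q ^ j') % n := me2
      rw [this, mul_one, Nat.mod_eq_of_lt hblt]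
    rw [efin]
    have g1 : q ^ t ≤ q ^ j' := Nat.pow_le_pow_right (by omega) hjt
    have g2 : q ^ j' ≤ v * q ^ j' := Nat.le_mul_of_pos_left _ hv
    omega

theorem stmt_8 (q m : ℕ) (hq : IsPrimePow q) (hm : Odd m) (hm3 : 3 ≤ m) :
    IsLeast {a : ℕ | 0 < a ∧ ¬ q ∣ a ∧ ¬ IsCosetLeader q (q ^ m - 1) a}
      (q ^ ((m + 1) / 2) + 1) := by
  obtain ⟨k, hk⟩ := hm
  have hq2 : 2 ≤ q := hq.two_le
  set t := (m + 1) / 2 with htdef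
  have ht : 2 * t = m + 1 := by omega
  have ht2 : 2 ≤ t := by omega
  set n := q ^ m - 1 with hn
  have hqm1 : 1 ≤ q ^ m := Nat.one_le_pow _ _ (by omega)
  have hqm : q ^ m = n + 1 := by omega
  constructor
  · refine ⟨by positivity, ?_, ?_⟩
    · intro h
      have hd : q ∣ q ^ t := dvd_pow_self q (by omega)
      have : q ∣ 1 := (Nat.dvd_add_right hd).mp h
      have := Nat.le_of_dvd one_pos this
      omega
    · intro hL
      have hL1 := hL (t - 1)
      have e1 : (q ^ t + 1) * q ^ (t - 1) = q ^ m + q ^ (t - 1) := by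
        rw [add_mul, one_mul, ← pow_add]
        congr 2
        omega
      have f1 : q ^ (t - 1) ≤ q ^ (m - 2) := Nat.pow_le_pow_right (by omega) (by omega)
      have f2 : q ^ 2 * q ^ (m - 2) = q ^ m := by rw [← pow_add]; congr 1; omega
      have f3 : 4 ≤ q ^ 2 := by
        calc 4 = 2 * 2 := rfl
          _ ≤ q * q := Nat.mul_le_mul hq2 hq2
          _ = q ^ 2 := (sq q).symm
      have f4 : 1 ≤ q ^ (m - 2) := Nat.one_le_pow _ _ (by omega)
      have f5 : 4 * q ^ (m - 2) ≤ q ^ m := by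
        rw [← f2]; exact Nat.mul_le_mul_right _ f3
      have hsmall : 1 + q ^ (t - 1) < n := by omega
      have e2 : (q ^ t + 1) * q ^ (t - 1) = n + (1 + q ^ (t - 1)) := by omega
      rw [e2, Nat.add_mod_left, Nat.mod_eq_of_lt hsmall] at hL1
      have g1 : q ^ (t - 1) < q ^ t := Nat.pow_lt_pow_right (by omega) (by omega)
      omega
  · rintro b ⟨hb0, hbq, hbL⟩
    by_contra hlt
    push_neg at hlt
    apply hbL
    apply leader_of_small q m t b hq2 ht ht2 hbq
    have : b ≠ q ^ t := by
      rintro rfl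
      exact hbq (dvd_pow_self q (by omega))
    omega
end

section
/- Let m ≥ 4 be even, h = m/2, n = q^m - 1, and let a be an integer with q^h + 1 ≤ a ≤ q^{h+1} and q ∤ a. Then: (1) if a = c(q^h + 1) for some 1 ≤ c ≤ q-1, then a is a coset leader with |C_a| = m/2; (2) if a = a_h q^h + a_0 with 1 ≤ a_0 < a_h ≤ q-1, then a is not a coset leader; (3) in all other cases a is a coset leader with |C_a| = m. -/
/-!
Write `m = 2k` and `n = q^(2k) - 1`. Since `q^(2k) ≡ 1 [MOD n]`, multiplication by `q` rotates
the `2k` base-`q` digits of a residue cyclically. Here `a = A q^k + B` with `A < q` a single digit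
and `0 < B < q^k`. Rotating by `j < k` digits just multiplies `a` by `q^j`; rotating by `k + i`
digits with `i > 0` moves a nonzero digit of `B` to a position above `k`; rotating by exactly `k`
gives `B q^k + A`. Hence `a` is a coset leader iff `A ≤ B`.

If `a q^d ≡ a` with `0 < d < 2k`, then also `a q^g ≡ a` for `g = gcd d (2k) ≤ k`, i.e.
`n ∣ a (q^g - 1)`. For `g < k` the right side is positive and smaller than `n`, so `g = k`,
`d = k` and `q^k + 1 ∣ a`: the coset has `k` elements for `a = c (q^k + 1)` and `2k` elements
otherwise.
-/

namespace CyclotomicCoset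

open Nat

section Periodicity

variable {q n a p : ℕ}

theorem mul_pow_mul_modEq (hp : a * q ^ p ≡ a [MOD n]) (s : ℕ) :
    a * q ^ (p * s) ≡ a [MOD n] := by
  induction s with
  | zero => simp [Nat.ModEq.refl]
  | succ s ih =>
    rw [Nat.mul_succ, pow_add, ← mul_assoc]
    exact (ih.mul_right _).trans hp

theorem mul_pow_modEq_mul_pow_mod (hp : a * q ^ p ≡ a [MOD n]) (j : ℕ) :
    a * q ^ j ≡ a * q ^ (j % p) [MOD n] := by
  conv_lhs => rw [← Nat.div_add_mod j p, pow_add, ← mul_assoc]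
  exact (mul_pow_mul_modEq hp _).mul_right _

theorem mul_pow_sub_modEq (hcop : Coprime q n) {i j : ℕ} (hij : i ≤ j)
    (h : a * q ^ i ≡ a * q ^ j [MOD n]) : a * q ^ (j - i) ≡ a [MOD n] := by
  refine Nat.ModEq.cancel_left_of_coprime (c := q ^ i) (Nat.coprime_comm.mp (hcop.pow_left i)) ?_
  calc q ^ i * (a * q ^ (j - i)) = a * q ^ j := by
        rw [mul_left_comm, ← pow_add, Nat.add_sub_cancel' hij]
    _ ≡ a * q ^ i [MOD n] := h.symm
    _ = q ^ i * a := mul_comm _ _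

theorem card_cyclCoset_eq (hcop : Coprime q n) (hp : 0 < p) (hpn : p ≤ n)
    (hper : a * q ^ p ≡ a [MOD n])
    (hmin : ∀ d, 0 < d → d < p → ¬ a * q ^ d ≡ a [MOD n]) :
    (cyclCoset q n a).card = p := by
  have himage : cyclCoset q n a = (Finset.range p).image (fun j => a * q ^ j % n) := by
    refine (Finset.image_subset_image (Finset.range_subset_range.2 hpn)).antisymm' ?_
    intro x hx
    obtain ⟨j, -, rfl⟩ := Finset.mem_image.mp hx
    exact Finset.mem_image.mpr
      ⟨j % p, Finset.mem_range.mpr (Nat.mod_lt j hp), (mul_pow_modEq_mul_pow_mod hper j).symm⟩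
  rw [himage, Finset.card_image_of_injOn, Finset.card_range]
  intro i hi j hj hij
  simp only [Finset.coe_range, Set.mem_Iio] at hi hj
  wlog hle : i ≤ j generalizing i j
  · exact (this hij.symm hj hi (by omega)).symm
  by_contra hne
  exact hmin (j - i) (by omega) (by omega) (mul_pow_sub_modEq hcop hle hij)

end Periodicity

theorem coprime_pow_sub_one {q m : ℕ} (hq : 0 < q) (hm : m ≠ 0) : Coprime q (q ^ m - 1) :=
  ((Nat.coprime_self_sub_right (Nat.one_le_pow _ _ hq)).mpr
    (Nat.coprime_one_right _)).coprime_dvd_left (dvd_pow_self q hm)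

theorem mod_pow_ne_zero {q a s : ℕ} (hqa : ¬ q ∣ a) (hs : s ≠ 0) : a % q ^ s ≠ 0 :=
  fun h => hqa ((dvd_pow_self q hs).trans (Nat.dvd_of_mod_eq_zero h))

theorem mul_pow_modEq_self {q : ℕ} (hq : 0 < q) (a m : ℕ) :
    a * q ^ m ≡ a [MOD q ^ m - 1] := by
  simpa using (Nat.modEq_sub (Nat.one_le_pow m q hq)).mul_left a

section HalfLength

variable {q k a : ℕ}

theorem mul_pow_add_pow_le (hq : 0 < q) (ha : a < q ^ (k + 1)) {j : ℕ} (hj : j < k) :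
    a * q ^ j + q ^ (k - 1) ≤ q ^ (2 * k) := by
  have h1 : (a + 1) * q ^ (k - 1) ≤ q ^ (2 * k) := by
    rw [show 2 * k = k + 1 + (k - 1) by omega, pow_add]
    exact Nat.mul_le_mul_right _ ha
  have h2 : a * q ^ j ≤ a * q ^ (k - 1) :=
    Nat.mul_le_mul_left _ (Nat.pow_le_pow_right hq (by omega))
  rw [Nat.add_one_mul] at h1
  omega

theorem mul_pow_mod_of_lt (hq : 2 ≤ q) (hk : 2 ≤ k) (ha : a < q ^ (k + 1)) {j : ℕ}
    (hj : j < k) :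
    a * q ^ j % (q ^ (2 * k) - 1) = a * q ^ j := by
  have h1 := mul_pow_add_pow_le (by omega) ha hj
  have h2 : 2 ≤ q ^ (k - 1) := (Nat.le_self_pow (by omega) q).trans' hq
  exact Nat.mod_eq_of_lt (by omega)

theorem mul_pow_add_mod (hq : 2 ≤ q) (hk : 2 ≤ k) (ha : a < q ^ (k + 1)) {i : ℕ}
    (hi : i < k) :
    a * q ^ (k + i) % (q ^ (2 * k) - 1) = a % q ^ (k - i) * q ^ (k + i) + a / q ^ (k - i) := by
  have hrot : a * q ^ (k + i) ≡ a % q ^ (k - i) * q ^ (k + i) + a / q ^ (k - i)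
      [MOD q ^ (2 * k) - 1] :=
    calc a * q ^ (k + i) = a / q ^ (k - i) * q ^ (2 * k) + a % q ^ (k - i) * q ^ (k + i) := by
          conv_lhs => rw [← Nat.div_add_mod' a (q ^ (k - i))]
          rw [add_mul, mul_assoc, ← pow_add, show k - i + (k + i) = 2 * k by omega]
      _ ≡ a / q ^ (k - i) * 1 + a % q ^ (k - i) * q ^ (k + i) [MOD q ^ (2 * k) - 1] :=
          ((Nat.modEq_sub (Nat.one_le_pow _ _ (by omega))).mul_left _).add_right _
      _ = a % q ^ (k - i) * q ^ (k + i) + a / q ^ (k - i) := by ring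
  refine Eq.trans hrot (Nat.mod_eq_of_lt ?_)
  have hlow : (a % q ^ (k - i) + 1) * q ^ (k + i) ≤ q ^ (2 * k) :=
    calc (a % q ^ (k - i) + 1) * q ^ (k + i) ≤ q ^ (k - i) * q ^ (k + i) :=
          Nat.mul_le_mul_right _ (Nat.mod_lt _ (by positivity))
      _ = q ^ (2 * k) := by rw [← pow_add, show k - i + (k + i) = 2 * k by omega]
  have hhigh : a / q ^ (k - i) < q ^ (i + 1) := by
    rw [Nat.div_lt_iff_lt_mul (by positivity), ← pow_add, show i + 1 + (k - i) = k + 1 by omega]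
    exact ha
  have hgap : q ^ (i + 1) < q ^ (k + i) := Nat.pow_lt_pow_right (by omega) (by omega)
  rw [Nat.add_one_mul] at hlow
  omega

theorem mul_pow_half_mod (hq : 2 ≤ q) (hk : 2 ≤ k) (ha : a < q ^ (k + 1)) :
    a * q ^ k % (q ^ (2 * k) - 1) = a % q ^ k * q ^ k + a / q ^ k := by
  simpa using mul_pow_add_mod hq hk ha (i := 0) (by omega)

theorem isCosetLeader_of_div_le_mod (hq : 2 ≤ q) (hk : 2 ≤ k) (ha : a < q ^ (k + 1))
    (hqa : ¬ q ∣ a) (hle : a / q ^ k ≤ a % q ^ k) : IsCosetLeader q (q ^ (2 * k) - 1) a := by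
  intro j
  rw [mul_pow_modEq_mul_pow_mod (mul_pow_modEq_self (by omega) a (2 * k)) j]
  have hr : j % (2 * k) < 2 * k := Nat.mod_lt _ (by omega)
  obtain hlow | ⟨i, hi⟩ : j % (2 * k) < k ∨ ∃ i, j % (2 * k) = k + i :=
    (lt_or_ge _ _).imp_right fun h => ⟨_, (Nat.add_sub_cancel' h).symm⟩
  · rw [mul_pow_mod_of_lt hq hk ha hlow]
    exact Nat.le_mul_of_pos_right _ (by positivity)
  rcases Nat.eq_zero_or_pos i with rfl | hi0
  · rw [hi, add_zero, mul_pow_half_mod hq hk ha]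
    have hdigits := Nat.div_add_mod' a (q ^ k)
    have hQ : 1 ≤ q ^ k := Nat.one_le_pow _ _ (by omega)
    nlinarith
  · rw [hi, mul_pow_add_mod hq hk ha (by omega)]
    have hB := Nat.one_le_iff_ne_zero.mpr (mod_pow_ne_zero hqa (show k - i ≠ 0 by omega))
    calc a ≤ q ^ (k + i) := ha.le.trans (Nat.pow_le_pow_right (by omega) (by omega))
      _ ≤ a % q ^ (k - i) * q ^ (k + i) := Nat.le_mul_of_pos_left _ hB
      _ ≤ _ := Nat.le_add_right _ _

theorem not_isCosetLeader_of_mod_lt_div (hq : 2 ≤ q) (hk : 2 ≤ k) (ha : a < q ^ (k + 1))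
    (hlt : a % q ^ k < a / q ^ k) : ¬ IsCosetLeader q (q ^ (2 * k) - 1) a := by
  intro h
  have hswap := h k
  rw [mul_pow_half_mod hq hk ha] at hswap
  have hdigits := Nat.div_add_mod' a (q ^ k)
  have hQ : 2 ≤ q ^ k := (Nat.le_self_pow (by omega) q).trans' hq
  nlinarith

theorem eq_and_dvd_of_mul_pow_modEq (hq : 2 ≤ q) (ha0 : 0 < a) (ha : a < q ^ (k + 1)) {d : ℕ}
    (hd0 : 0 < d) (hd : d < 2 * k) (h : a * q ^ d ≡ a [MOD q ^ (2 * k) - 1]) :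
    d = k ∧ q ^ k + 1 ∣ a := by
  set g := Nat.gcd d (2 * k)
  have hdvd_d : q ^ (2 * k) - 1 ∣ a * (q ^ d - 1) := by
    rw [Nat.mul_sub_one]
    exact (Nat.modEq_iff_dvd' (Nat.le_mul_of_pos_right a (by positivity))).mp h.symm
  have hdvd_g : q ^ (2 * k) - 1 ∣ a * (q ^ g - 1) := by
    have := Nat.dvd_gcd hdvd_d (Nat.dvd_mul_left (q ^ (2 * k) - 1) a)
    rwa [Nat.gcd_mul_left, Nat.pow_sub_one_gcd_pow_sub_one] at this
  have hg0 : 0 < g := Nat.gcd_pos_of_pos_left _ hd0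
  have hgd : g ∣ d := Nat.gcd_dvd_left _ _
  have hgk : g ≤ k := by
    obtain ⟨t, ht⟩ := Nat.gcd_dvd_right d (2 * k)
    have hgd' : g ≤ d := Nat.le_of_dvd hd0 hgd
    rcases t with _ | _ | t
    · omega
    · omega
    · nlinarith
  have hgk' : g = k := by
    by_contra hne
    have hsize := mul_pow_add_pow_le (by omega) ha (show g < k by omega)
    have hqg : 1 < q ^ g := Nat.one_lt_pow hg0.ne' (by omega)
    have hle := Nat.le_of_dvd (Nat.mul_pos ha0 (by omega)) hdvd_g
    rw [Nat.mul_sub_one] at hle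
    have haq : a ≤ a * q ^ g := Nat.le_mul_of_pos_right _ (by omega)
    have hqk : 1 ≤ q ^ (k - 1) := Nat.one_le_pow _ _ (by omega)
    omega
  refine ⟨?_, ?_⟩
  · obtain ⟨t, ht⟩ := hgk' ▸ hgd
    rcases t with _ | _ | t <;> nlinarith
  · rw [hgk', two_mul, pow_add, mul_self_tsub_one] at hdvd_g
    exact Nat.dvd_of_mul_dvd_mul_right (Nat.sub_pos_of_lt (Nat.one_lt_pow (by omega) hq)) hdvd_g

theorem card_cyclCoset_mul_pow_add_one (hq : 2 ≤ q) (hk : 1 ≤ k) {c : ℕ} (hc0 : 0 < c)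
    (hc : c < q) : (cyclCoset q (q ^ (2 * k) - 1) (c * (q ^ k + 1))).card = k := by
  have hqk : q ≤ q ^ k := Nat.le_self_pow (by omega) q
  have ha : c * (q ^ k + 1) < q ^ (k + 1) := by
    rw [pow_succ]; nlinarith
  refine card_cyclCoset_eq (coprime_pow_sub_one (by omega) (by omega)) hk
    ((show k ≤ 2 * k by omega).trans (Nat.le_sub_one_of_lt (Nat.lt_pow_self (by omega)))) ?_ ?_
  · refine ((Nat.modEq_iff_dvd' (Nat.le_mul_of_pos_right _ (by positivity))).mpr ?_).symm
    rw [← Nat.mul_sub_one, two_mul, pow_add, mul_self_tsub_one, mul_assoc]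
    exact Nat.dvd_mul_left _ _
  · intro d hd0 hdk h
    have := (eq_and_dvd_of_mul_pow_modEq hq (by positivity) ha hd0 (by omega) h).1
    omega

theorem card_cyclCoset_of_not_dvd (hq : 2 ≤ q) (hk : 1 ≤ k) (ha0 : 0 < a) (ha : a < q ^ (k + 1))
    (hndvd : ¬ q ^ k + 1 ∣ a) : (cyclCoset q (q ^ (2 * k) - 1) a).card = 2 * k :=
  card_cyclCoset_eq (coprime_pow_sub_one (by omega) (by omega)) (by omega)
    (Nat.le_sub_one_of_lt (Nat.lt_pow_self (by omega))) (mul_pow_modEq_self (by omega) a (2 * k))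
    fun _ hd0 hd h => hndvd (eq_and_dvd_of_mul_pow_modEq hq ha0 ha hd0 hd h).2

end HalfLength

end CyclotomicCoset

open CyclotomicCoset

theorem stmt_10_general (q m : ℕ) (hm : Even m) (hm4 : 4 ≤ m) (a : ℕ)
    (ha1 : q ^ (m / 2) + 1 ≤ a) (ha2 : a ≤ q ^ (m / 2 + 1)) (hqa : ¬ q ∣ a) :
    ((∃ c : ℕ, 1 ≤ c ∧ c ≤ q - 1 ∧ a = c * (q ^ (m / 2) + 1)) →
      IsCosetLeader q (q ^ m - 1) a ∧ (cyclCoset q (q ^ m - 1) a).card = m / 2) ∧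
    ((∃ ah a0 : ℕ, 1 ≤ a0 ∧ a0 < ah ∧ ah ≤ q - 1 ∧ a = ah * q ^ (m / 2) + a0) →
      ¬ IsCosetLeader q (q ^ m - 1) a) ∧
    (((¬ ∃ c : ℕ, 1 ≤ c ∧ c ≤ q - 1 ∧ a = c * (q ^ (m / 2) + 1)) ∧
      (¬ ∃ ah a0 : ℕ, 1 ≤ a0 ∧ a0 < ah ∧ ah ≤ q - 1 ∧ a = ah * q ^ (m / 2) + a0)) →
      IsCosetLeader q (q ^ m - 1) a ∧ (cyclCoset q (q ^ m - 1) a).card = m) := by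
  obtain ⟨k, rfl⟩ : ∃ k, m = 2 * k := ⟨m / 2, by have := Nat.even_iff.mp hm; omega⟩
  rw [show 2 * k / 2 = k by omega] at *
  have hk : 2 ≤ k := by omega
  have hq : 2 ≤ q := by
    by_contra
    interval_cases q <;> simp_all
  have ha : a < q ^ (k + 1) := lt_of_le_of_ne ha2 fun h => hqa (h ▸ dvd_pow_self q (by omega))
  have hqk : q ≤ q ^ k := Nat.le_self_pow (by omega) q
  have hdigits : ∀ x y, y < q ^ k → a = x * q ^ k + y → a / q ^ k = x ∧ a % q ^ k = y :=
    fun x y hy h => (Nat.div_mod_unique (by positivity)).2 ⟨by rw [h]; ring, hy⟩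
  refine ⟨?_, ?_, ?_⟩
  · rintro ⟨c, hc1, hcq, rfl⟩
    obtain ⟨hdiv, hmod⟩ := hdigits c c (by omega) (by ring)
    exact ⟨isCosetLeader_of_div_le_mod hq hk ha hqa (by rw [hdiv, hmod]),
      card_cyclCoset_mul_pow_add_one hq (by omega) hc1 (by omega)⟩
  · rintro ⟨ah, a0, -, hlt, hah, rfl⟩
    obtain ⟨hdiv, hmod⟩ := hdigits ah a0 (by omega) rfl
    exact not_isCosetLeader_of_mod_lt_div hq hk ha (by rwa [hdiv, hmod])
  · rintro ⟨hnot1, hnot2⟩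
    refine ⟨isCosetLeader_of_div_le_mod hq hk ha hqa ?_,
      card_cyclCoset_of_not_dvd hq (by omega) (by omega) ha ?_⟩
    · by_contra! hlt
      have hA : a / q ^ k < q := Nat.div_lt_of_lt_mul (by rwa [← pow_succ])
      exact hnot2 ⟨_, _, Nat.one_le_iff_ne_zero.mpr (mod_pow_ne_zero hqa (by omega)), hlt,
        by omega, (Nat.div_add_mod' a _).symm⟩
    · rintro ⟨c, rfl⟩
      have hc : c < q :=
        Nat.lt_of_mul_lt_mul_left (a := q ^ k + 1) (by rw [pow_succ] at ha; nlinarith)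
      exact hnot1 ⟨c, Nat.one_le_iff_ne_zero.mpr (by rintro rfl; omega), by omega, mul_comm _ _⟩

theorem stmt_10 (q m : ℕ) (hq : IsPrimePow q) (hm : Even m) (hm4 : 4 ≤ m) (a : ℕ)
    (ha1 : q ^ (m / 2) + 1 ≤ a) (ha2 : a ≤ q ^ (m / 2 + 1)) (hqa : ¬ q ∣ a) :
    ((∃ c : ℕ, 1 ≤ c ∧ c ≤ q - 1 ∧ a = c * (q ^ (m / 2) + 1)) →
      IsCosetLeader q (q ^ m - 1) a ∧ (cyclCoset q (q ^ m - 1) a).card = m / 2) ∧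
    ((∃ ah a0 : ℕ, 1 ≤ a0 ∧ a0 < ah ∧ ah ≤ q - 1 ∧ a = ah * q ^ (m / 2) + a0) →
      ¬ IsCosetLeader q (q ^ m - 1) a) ∧
    (((¬ ∃ c : ℕ, 1 ≤ c ∧ c ≤ q - 1 ∧ a = c * (q ^ (m / 2) + 1)) ∧
      (¬ ∃ ah a0 : ℕ, 1 ≤ a0 ∧ a0 < ah ∧ ah ≤ q - 1 ∧ a = ah * q ^ (m / 2) + a0)) →
      IsCosetLeader q (q ^ m - 1) a ∧ (cyclCoset q (q ^ m - 1) a).card = m) :=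
  stmt_10_general q m hm hm4 a ha1 ha2 hqa
end

section
/- Let n' be a positive integer with gcd(n', q) = 1 and (q-1) | n', let δ_b be a positive divisor of n'/(q-1), and let δ = k δ_b with 1 ≤ k ≤ q - 1. Then the narrow-sense BCH code C over GF(q) of length n' with designed distance δ (defining set {1, ..., δ-1} of powers of a primitive n'-th root of unity β) has minimum distance exactly δ. Specifically, the polynomial c(x) = ((x^{n'} - 1)/(x^{n'/δ_b} - 1)) · Π_{i=1}^{k-1} (x^{n'/(δ_b(q-1))} - β^{i n'/(q-1)}) is a nonzero codeword of C of Hamming weight at most δ, and the BCH bound gives d ≥ δ. -/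
open Polynomial Finset

namespace Polynomial

variable {R : Type*} [CommSemiring R]

theorem card_support_expand_le {p : ℕ} (hp : 0 < p) (f : R[X]) :
    #(expand R p f).support ≤ #f.support := by
  classical
  have hsub : (expand R p f).support ⊆ f.support.image (· * p) := by
    intro n hn
    rw [mem_support_iff, coeff_expand hp] at hn
    split_ifs at hn with hdvd
    · exact mem_image.2 ⟨n / p, mem_support_iff.2 hn, Nat.div_mul_cancel hdvd⟩
    · exact absurd rfl hn
  exact (card_le_card hsub).trans card_image_le

theorem natDegree_geom_sum_X_le (m : ℕ) : (∑ t ∈ range m, (X : R[X]) ^ t).natDegree ≤ m - 1 :=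
  natDegree_sum_le_of_forall_le _ _ fun t ht =>
    (natDegree_X_pow_le t).trans (Nat.le_sub_one_of_lt (mem_range.1 ht))

end Polynomial

theorem FiniteField.exists_algebraMap_eq_of_pow_card_eq_self {F E : Type*} [Field F] [Fintype F]
    [CommRing E] [IsDomain E] [Algebra F E] {x : E} (hx : x ^ Fintype.card F = x) :
    ∃ a : F, algebraMap F E a = x := by
  have hcard := FiniteField.roots_X_pow_card_sub_X F
  have hmap := roots_map_of_injective_of_card_eq_natDegree (algebraMap F E).injective
    (p := (X ^ Fintype.card F - X : F[X])) (by
      rw [hcard, FiniteField.X_pow_card_sub_X_natDegree_eq F Fintype.one_lt_card]; rfl)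
  have hroot : x ∈ (map (algebraMap F E) (X ^ Fintype.card F - X)).roots := by
    rw [mem_roots (map_ne_zero (FiniteField.X_pow_card_sub_X_ne_zero F Fintype.one_lt_card))]
    simp [hx]
  rw [← hmap, hcard] at hroot
  simpa using hroot

theorem IsPrimitiveRoot.le_card_support_of_aeval_pow_eq_zero {F E : Type*} [Field F] [CommRing E]
    [IsDomain E] [Algebra F E] {β : E} {n : ℕ} (hβ : IsPrimitiveRoot β n) {c : F[X]}
    (hc : c ≠ 0) (hdeg : c.natDegree < n) {δ : ℕ}
    (hvan : ∀ j : ℕ, 1 ≤ j → j ≤ δ - 1 → aeval (β ^ j) c = 0) :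
    δ ≤ #c.support := by
  by_contra! hlt
  classical
  set e := c.support.equivFin.symm
  have hlt_n : ∀ i, (e i : ℕ) < n := fun i => (le_natDegree_of_mem_supp _ (e i).2).trans_lt hdeg
  have hβ0 : β ≠ 0 := hβ.ne_zero (by omega)
  let x : Fin #c.support → E := fun i => β ^ (e i : ℕ)
  let v : Fin #c.support → E := fun i => algebraMap F E (c.coeff (e i)) * x i
  have hx : Function.Injective x := fun i i' h =>
    e.injective (Subtype.ext (hβ.pow_inj (hlt_n i) (hlt_n i') h))
  have hv : v = 0 := Matrix.eq_zero_of_forall_pow_sum_mul_pow_eq_zero hx fun j => by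
    have := hvan (j + 1) (by omega) (by omega)
    rw [aeval_def, eval₂_eq_sum, sum_def, ← c.support.sum_coe_sort, ← e.sum_comp] at this
    rw [← this]
    refine sum_congr rfl fun i _ => ?_
    simp only [v, x]
    ring
  have h0 : (0 : ℕ) < #c.support := card_pos.2 (support_nonempty.2 hc)
  have hv0 := congrFun hv ⟨0, h0⟩
  simp only [v, x, Pi.zero_apply, mul_eq_zero, pow_eq_zero_iff', hβ0, false_and, or_false,
    map_eq_zero_iff _ (algebraMap F E).injective] at hv0
  exact mem_support_iff.1 (e _).2 hv0

section MinWeightWord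

variable {F : Type*} [Field F]

/-- With `a = n' / δb` and `b = a / (q - 1)`, this is the paper's
`((x ^ n' - 1) / (x ^ a - 1)) * ∏ i ∈ [1, k), (x ^ b - γ ^ i)`. -/
noncomputable def bchMinWeightWord (γ : F) (δb k a b : ℕ) : F[X] :=
  expand F a (∑ t ∈ range δb, X ^ t) * expand F b (∏ i ∈ Ico 1 k, (X - C (γ ^ i)))

variable (γ : F) {δb k a b : ℕ}

theorem bchMinWeightWord_ne_zero (hδb : 0 < δb) (ha : 0 < a) (hb : 0 < b) :
    bchMinWeightWord γ δb k a b ≠ 0 :=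
  mul_ne_zero ((expand_ne_zero ha).2 (monic_geom_sum_X hδb.ne').ne_zero)
    ((expand_ne_zero hb).2 (monic_prod_of_monic _ _ fun _ _ => monic_X_sub_C _).ne_zero)

theorem natDegree_bchMinWeightWord_le :
    (bchMinWeightWord γ δb k a b).natDegree ≤ (δb - 1) * a + (k - 1) * b := by
  refine natDegree_mul_le.trans (add_le_add ?_ ?_) <;> rw [natDegree_expand]
  · exact Nat.mul_le_mul_right _ (natDegree_geom_sum_X_le _)
  · rw [natDegree_finsetProd_X_sub_C_eq_card, Nat.card_Ico]

theorem card_support_bchMinWeightWord_le (hδb : 0 < δb) (hk : 0 < k) (ha : 0 < a) (hb : 0 < b) :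
    #(bchMinWeightWord γ δb k a b).support ≤ δb * k := by
  refine card_support_mul_le.trans (Nat.mul_le_mul ?_ ?_)
  · refine (card_support_expand_le ha _).trans ((card_supp_le_succ_natDegree _).trans ?_)
    have := natDegree_geom_sum_X_le (R := F) δb
    omega
  · refine (card_support_expand_le hb _).trans ((card_supp_le_succ_natDegree _).trans ?_)
    rw [natDegree_finsetProd_X_sub_C_eq_card, Nat.card_Ico]
    omega

theorem aeval_bchMinWeightWord_eq_zero {E : Type*} [Field E] [Algebra F E] {β : E}
    (hβ : IsPrimitiveRoot β (δb * a)) (hγ : algebraMap F E γ = β ^ (δb * b)) (ha : 0 < a)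
    {j : ℕ} (hj1 : 1 ≤ j) (hj : j < k * δb) :
    aeval (β ^ j) (bchMinWeightWord γ δb k a b) = 0 := by
  rw [bchMinWeightWord, map_mul, expand_aeval, expand_aeval]
  by_cases hdvd : δb ∣ j
  · obtain ⟨s, rfl⟩ := hdvd
    refine mul_eq_zero_of_right _ ?_
    rw [map_prod]
    refine prod_eq_zero (i := s) ?_ ?_
    · refine mem_Ico.2 ⟨Nat.pos_of_ne_zero ?_, Nat.lt_of_mul_lt_mul_left (a := δb) ?_⟩
      · rintro rfl
        simp at hj1
      · rwa [mul_comm k] at hj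
    · rw [map_sub, aeval_X, aeval_C, map_pow, hγ, ← pow_mul, ← pow_mul, mul_right_comm,
        sub_self]
  · refine mul_eq_zero_of_left ?_ _
    have hy : (β ^ j) ^ a ≠ 1 := by
      rw [← pow_mul, Ne, hβ.pow_eq_one_iff_dvd]
      exact fun h => hdvd (Nat.dvd_of_mul_dvd_mul_right ha h)
    have hyδb : ((β ^ j) ^ a) ^ δb = 1 := by
      rw [show ((β ^ j) ^ a) ^ δb = (β ^ (δb * a)) ^ j by ring, hβ.pow_eq_one, one_pow]
    simp only [map_sum, map_pow, aeval_X]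
    rw [geom_sum_eq hy, hyδb, sub_self, zero_div]

end MinWeightWord

theorem stmt_13_general (q : ℕ)
    (F : Type*) [Field F] [Fintype F] (hF : Fintype.card F = q)
    (E : Type*) [Field E] [Algebra F E]
    (n' : ℕ) (hn : 0 < n') (hdvd : (q - 1) ∣ n')
    (β : E) (hβ : IsPrimitiveRoot β n')
    (δb : ℕ) (hδb : 0 < δb) (hδbdvd : δb ∣ n' / (q - 1))
    (k δ : ℕ) (hk1 : 1 ≤ k) (hk2 : k ≤ q - 1) (hδ : δ = k * δb) :
    IsLeast {w : ℕ | ∃ c : Polynomial F, c ≠ 0 ∧ c.natDegree < n' ∧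
      (∀ j : ℕ, 1 ≤ j → j ≤ δ - 1 → Polynomial.aeval (β ^ j) c = 0) ∧
      w = c.support.card} δ := by
  set b := n' / (q - 1) / δb
  have hn' : n' = δb * (b * (q - 1)) := by
    rw [← mul_assoc, Nat.mul_div_cancel' hδbdvd, Nat.div_mul_cancel hdvd]
  have hb : 0 < b := Nat.pos_of_ne_zero fun hb => by simp [hb] at hn'; omega
  have ha : 0 < b * (q - 1) := Nat.mul_pos hb (by omega)
  have hfixed : (β ^ (δb * b)) ^ Fintype.card F = β ^ (δb * b) := by
    rw [hF, ← Nat.sub_add_cancel (by omega : 1 ≤ q), pow_succ, ← pow_mul, mul_assoc, ← hn',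
      hβ.pow_eq_one, one_mul]
  obtain ⟨γ, hγ⟩ := FiniteField.exists_algebraMap_eq_of_pow_card_eq_self hfixed
  set c := bchMinWeightWord γ δb k (b * (q - 1)) b
  have hc : c ≠ 0 := bchMinWeightWord_ne_zero γ hδb ha hb
  have hdeg : c.natDegree < n' := by
    refine (natDegree_bchMinWeightWord_le γ).trans_lt ?_
    have h₁ : (k - 1) * b < b * (q - 1) := by
      rw [mul_comm b]; exact Nat.mul_lt_mul_of_pos_right (by omega) hb
    have h₂ : (δb - 1) * (b * (q - 1)) + b * (q - 1) = n' := by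
      rw [hn', ← Nat.succ_mul, Nat.succ_eq_add_one, Nat.sub_add_cancel hδb]
    omega
  have hvan : ∀ j : ℕ, 1 ≤ j → j ≤ δ - 1 → aeval (β ^ j) c = 0 := fun j hj1 hj =>
    aeval_bchMinWeightWord_eq_zero γ (hn' ▸ hβ) hγ ha hj1 (by omega)
  refine ⟨⟨c, hc, hdeg, hvan, le_antisymm ?_ ?_⟩, ?_⟩
  · exact hβ.le_card_support_of_aeval_pow_eq_zero hc hdeg hvan
  · rw [hδ, mul_comm]
    exact card_support_bchMinWeightWord_le γ hδb hk1 ha hb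
  · rintro w ⟨c', hc', hdeg', hvan', rfl⟩
    exact hβ.le_card_support_of_aeval_pow_eq_zero hc' hdeg' hvan'

theorem stmt_13 (q : ℕ) (hq : IsPrimePow q)
    (F : Type*) [Field F] [Fintype F] (hF : Fintype.card F = q)
    (E : Type*) [Field E] [Algebra F E]
    (n' : ℕ) (hn : 0 < n') (hcop : Nat.Coprime n' q) (hdvd : (q - 1) ∣ n')
    (β : E) (hβ : IsPrimitiveRoot β n')
    (δb : ℕ) (hδb : 0 < δb) (hδbdvd : δb ∣ n' / (q - 1))
    (k δ : ℕ) (hk1 : 1 ≤ k) (hk2 : k ≤ q - 1) (hδ : δ = k * δb) :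
    IsLeast {w : ℕ | ∃ c : Polynomial F, c ≠ 0 ∧ c.natDegree < n' ∧
      (∀ j : ℕ, 1 ≤ j → j ≤ δ - 1 → Polynomial.aeval (β ^ j) c = 0) ∧
      w = c.support.card} δ :=
  stmt_13_general q F hF E n' hn hdvd β hβ δb hδb hδbdvd k δ hk1 hk2 hδ
end

section
/- Let m ≥ 5 be odd, h = (m-1)/2, n = (q^m - 1)/(q - 1), and let a be an integer with q^h ≤ a ≤ q^{h+1}, q ∤ a, of the form a = a_h · (q^{h+1} - q)/(q - 1) + a_0 (i.e., digits a_1 = ... = a_h all equal, a_0 arbitrary nonzero). If a_h < a_0 ≤ 2a_h, then a is not the coset leader of its q-cyclotomic coset modulo n. -/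
lemma stmt14_geo (q k : ℕ) : (q - 1) * ∑ i ∈ Finset.range k, q ^ i = q ^ k - 1 := by
  induction k with
  | zero => simp
  | succ k ih =>
    rw [Finset.sum_range_succ, Nat.mul_add, ih, pow_succ]
    rcases Nat.eq_zero_or_pos q with h | h
    · subst h; cases k <;> simp
    have h1 : 1 ≤ q ^ k := Nat.one_le_pow _ _ h
    have h2 : (q - 1) * q ^ k + q ^ k = q ^ k * q := by
      have : (q - 1) * q ^ k + q ^ k = (q - 1 + 1) * q ^ k := by ring
      rw [this]
      have : q - 1 + 1 = q := by omega
      rw [this]; ring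
    generalize (q - 1) * q ^ k = B at h2 ⊢
    generalize q ^ k * q = C at h2 ⊢
    omega

theorem stmt_14 (q m : ℕ) (hq : IsPrimePow q) (hm : Odd m) (hm5 : 5 ≤ m)
    (a ah a0 : ℕ)
    (ha1 : q ^ ((m - 1) / 2) ≤ a) (ha2 : a ≤ q ^ ((m - 1) / 2 + 1)) (hqa : ¬ q ∣ a)
    (hah : ah ≤ q - 1) (ha0 : a0 ≤ q - 1)
    (hd : a = ah * ((q ^ ((m - 1) / 2 + 1) - q) / (q - 1)) + a0)
    (hlt : ah < a0) (hle : a0 ≤ 2 * ah) :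
    ¬ IsCosetLeader q ((q ^ m - 1) / (q - 1)) a := by
  intro hL
  have hq2 : 2 ≤ q := hq.two_le
  obtain ⟨k, hk⟩ := hm
  set h := (m - 1) / 2 with hh
  have hmh : m = 2 * h + 1 := by omega
  have hh2 : 2 ≤ h := by omega
  set t := ∑ i ∈ Finset.range h, q ^ i with ht
  have hgt : (q - 1) * t = q ^ h - 1 := stmt14_geo q h
  have hXpos : 1 ≤ q ^ h := Nat.one_le_pow _ _ (by omega)
  have hXq : q ≤ q ^ h := by
    calc q = q ^ 1 := (pow_one q).symm
    _ ≤ q ^ h := Nat.pow_le_pow_right (by omega) (by omega)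
  have htpos : 1 ≤ t := by
    rcases Nat.eq_zero_or_pos t with h0 | h0
    · rw [h0, mul_zero] at hgt; omega
    · exact h0
  -- q * t = q^h - 1 + t
  have e : (q - 1) * t + t = q * t := by
    have h1 : (q - 1) * t + t = (q - 1 + 1) * t := by ring
    rw [h1]
    have : q - 1 + 1 = q := by omega
    rw [this]
  have e2 : q ^ h - 1 + t = q * t := by rw [← hgt]; exact e
  -- (q^(h+1) - q) / (q - 1) = q * t
  have hstep : q * (q ^ h - 1) + q = q ^ (h + 1) := by
    have c1 : q * (q ^ h - 1) + q = q * (q ^ h - 1 + 1) := by ring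
    rw [c1]
    have c2 : q ^ h - 1 + 1 = q ^ h := by omega
    rw [c2, pow_succ]; ring
  have hmulform : q * t * (q - 1) = q * (q ^ h - 1) := by
    have : q * t * (q - 1) = q * ((q - 1) * t) := by ring
    rw [this, hgt]
  have hdiv : (q ^ (h + 1) - q) / (q - 1) = q * t := by
    apply Nat.div_eq_of_eq_mul_left (by omega : 0 < q - 1)
    rw [hmulform]
    generalize hD : q * (q ^ h - 1) = D at hstep ⊢
    omega
  rw [hdiv] at hd
  -- the modulus equals N
  set N := t + q ^ h + q ^ (h + 1) * t with hN
  have hs1 : (q - 1) * q ^ h + q ^ h = q ^ (h + 1) := by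
    have c1 : (q - 1) * q ^ h + q ^ h = (q - 1 + 1) * q ^ h := by ring
    rw [c1]
    have : q - 1 + 1 = q := by omega
    rw [this, pow_succ]; ring
  have hs2 : q ^ (h + 1) * (q ^ h - 1) + q ^ (h + 1) = q ^ m := by
    have c1 : q ^ (h + 1) * (q ^ h - 1) + q ^ (h + 1) = q ^ (h + 1) * (q ^ h - 1 + 1) := by ring
    rw [c1]
    have c2 : q ^ h - 1 + 1 = q ^ h := by omega
    rw [c2, ← pow_add]
    congr 1
    omega
  have hnval : (q ^ m - 1) / (q - 1) = N := by
    apply Nat.div_eq_of_eq_mul_left (by omega : 0 < q - 1)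
    have expand : N * (q - 1) = (q - 1) * t + ((q - 1) * q ^ h + q ^ (h + 1) * ((q - 1) * t)) := by
      rw [hN]; ring
    rw [expand, hgt]
    generalize hB : (q - 1) * q ^ h = B at hs1 ⊢
    generalize hC : q ^ (h + 1) * (q ^ h - 1) = C at hs2 ⊢
    generalize hY : q ^ (h + 1) = Y at hs1 hs2 ⊢
    omega
  -- strict inequality giving v well-defined
  have f1 : ah * t ≤ (q - 1) * t := Nat.mul_le_mul_right t hah
  have f2 : (ah + 1) * q ^ h ≤ a0 * q ^ h := Nat.mul_le_mul_right _ hlt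
  rw [add_one_mul] at f2
  have hgt' : (q - 1) * t + 1 = q ^ h := by rw [hgt]; omega
  have hv : ah * t + ah * q ^ h < a0 * q ^ h := by linarith
  obtain ⟨v, hsum⟩ : ∃ v, v + (ah * t + ah * q ^ h) = a0 * q ^ h :=
    ⟨a0 * q ^ h - (ah * t + ah * q ^ h), Nat.sub_add_cancel hv.le⟩
  -- the key identity
  have heq : a * q ^ h + (ah * t + ah * q ^ h) = ah * N + a0 * q ^ h := by
    rw [hd, hN]
    simp only [pow_succ]
    ring
  have haN : a * q ^ h = ah * N + v := by
    have step : a * q ^ h + (ah * t + ah * q ^ h)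
        = (ah * N + v) + (ah * t + ah * q ^ h) := by
      rw [heq, add_assoc, hsum]
    exact Nat.add_right_cancel step
  -- v < a
  have hmulqt : ah * (q * t) + ah = ah * q ^ h + ah * t := by
    calc ah * (q * t) + ah = ah * (q * t + 1) := by ring
    _ = ah * (q ^ h - 1 + t + 1) := by rw [← e2]
    _ = ah * (q ^ h + t) := by congr 1; omega
    _ = ah * q ^ h + ah * t := by ring
  have hP3 : a0 * q ^ h ≤ 2 * (ah * q ^ h) := by
    have := Nat.mul_le_mul_right (q ^ h) hle
    calc a0 * q ^ h ≤ 2 * ah * q ^ h := this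
    _ = 2 * (ah * q ^ h) := by ring
  have hva : v < a := by
    rw [hd]
    have hs := hsum; have hmq := hmulqt; have hp := hP3
    generalize ah * (q * t) = P4 at hmq ⊢
    generalize ah * t = P1 at hs hmq
    generalize ah * q ^ h = P2 at hs hmq hp
    generalize a0 * q ^ h = P3 at hs hp
    omega
  -- v < N
  have hNbig : q ^ (h + 1) < N := by
    have : q ^ (h + 1) ≤ q ^ (h + 1) * t := Nat.le_mul_of_pos_right _ htpos
    rw [hN]
    linarith
  have hvN : v < N := lt_of_lt_of_le (lt_of_lt_of_le hva ha2) hNbig.le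
  -- contradiction
  have hj := hL h
  rw [hnval] at hj
  have hmod : a * q ^ h % N = v := by
    rw [haN, add_comm, Nat.add_mul_mod_self_right, Nat.mod_eq_of_lt hvN]
  rw [hmod] at hj
  omega
end

section
/- Let m ≥ 4 be even, h = m/2, n = q^m + 1. For every integer a with q^{h-1} ≤ a ≤ q^h and q ∤ a, a is the coset leader of its q-cyclotomic coset modulo n and |C_a| = 2m. -/
/-!
Write `N = q^m + 1` with `m = 2h`. Since `q^m ≡ -1 (mod N)`, the residues `a q^k mod N` satisfy
`r_{k+m} = N - r_k`, and it suffices to show `a < r_k < N - a` for `0 < k < m`. For `k ≤ h`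
there is no reduction at all. For `h < k < m`, put `d = m - k` and split `a = q^d A + B`; then
`a q^k ≡ B q^k - A`, and `B ≠ 0` because `q ∤ a`, which keeps this residue large. Hence `a` is
strictly smaller than every other `a q^k mod N`, `0 < k < 2m`, which makes it the leader and, as
`q` is invertible mod `N`, forces the `2m` residues to be distinct.
-/

open Finset Function

theorem Nat.pos_of_not_dvd {q a : ℕ} (h : ¬ q ∣ a) : 0 < a :=
  Nat.pos_of_ne_zero fun h0 => h (h0 ▸ dvd_zero q)

theorem Nat.pow_two_mul_modEq_one (q m : ℕ) : q ^ (2 * m) ≡ 1 [MOD q ^ m + 1] :=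
  Nat.modEq_iff_dvd.mpr ⟨1 - (q : ℤ) ^ m, by push_cast; ring⟩

theorem Nat.mul_self_mod_succ {N r : ℕ} (hr0 : 0 < r) (hr : r ≤ N) :
    r * N % (N + 1) = N + 1 - r := by
  have h : r * N = (r - 1) * (N + 1) + (N + 1 - r) := by
    zify [hr0, hr, (by omega : r ≤ N + 1)]; ring
  rw [h, Nat.mul_comm, Nat.mul_add_mod, Nat.mod_eq_of_lt (by omega)]

theorem periodic_mul_pow_mod (q m a : ℕ) :
    Periodic (fun j => a * q ^ j % (q ^ m + 1)) (2 * m) := fun j => by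
  have h := (Nat.pow_two_mul_modEq_one q m).mul_left (a * q ^ j)
  rw [mul_one, mul_assoc, ← pow_add] at h
  exact h

theorem mul_pow_add_mod (q m a k : ℕ) (hk : 0 < a * q ^ k % (q ^ m + 1)) :
    a * q ^ (k + m) % (q ^ m + 1) = q ^ m + 1 - a * q ^ k % (q ^ m + 1) := by
  have hlt : a * q ^ k % (q ^ m + 1) < q ^ m + 1 := Nat.mod_lt _ (by omega)
  rw [pow_add, ← mul_assoc, Nat.mul_mod, Nat.mod_eq_of_lt (by omega : q ^ m < q ^ m + 1),
    Nat.mul_self_mod_succ hk (by omega)]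

theorem injOn_mul_pow_mod (q m a : ℕ)
    (h : ∀ k, 0 < k → k < 2 * m → a * q ^ k % (q ^ m + 1) ≠ a % (q ^ m + 1)) :
    Set.InjOn (fun j => a * q ^ j % (q ^ m + 1)) (Set.Iio (2 * m)) := by
  have key : ∀ i j, i < j → j < 2 * m → a * q ^ i % (q ^ m + 1) ≠ a * q ^ j % (q ^ m + 1) := by
    intro i j hij hj heq
    have hone := Nat.pow_two_mul_modEq_one q m
    refine h (j - i) (by omega) (by omega) (Nat.ModEq.symm ?_)
    calc a ≡ a * q ^ (2 * m) [MOD q ^ m + 1] := by simpa using (hone.mul_left a).symm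
      _ = a * q ^ i * q ^ (2 * m - i) := by rw [mul_assoc, ← pow_add]; congr 2; omega
      _ ≡ a * q ^ j * q ^ (2 * m - i) [MOD q ^ m + 1] := Nat.ModEq.mul_right _ heq
      _ = a * q ^ (j - i) * q ^ (2 * m) := by
        rw [mul_assoc, mul_assoc, ← pow_add, ← pow_add]; congr 2; omega
      _ ≡ a * q ^ (j - i) [MOD q ^ m + 1] := by simpa using hone.mul_left (a * q ^ (j - i))
  intro i hi j hj hij
  rcases lt_trichotomy i j with hlt | heq | hgt
  · exact absurd hij (key i j hlt hj)
  · exact heq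
  · exact absurd hij.symm (key j i hgt hi)

theorem Function.Periodic.card_image_range {α : Type*} [DecidableEq α] {f : ℕ → α} {p n : ℕ}
    (hf : Periodic f p) (hp : 0 < p) (hpn : p ≤ n) (hinj : Set.InjOn f (Set.Iio p)) :
    ((range n).image f).card = p := by
  have himage : (range n).image f = (range p).image f := by
    refine le_antisymm ?_ (image_subset_image (range_subset_range.mpr hpn))
    rintro _ hx
    obtain ⟨j, -, rfl⟩ := mem_image.mp hx
    exact mem_image.mpr ⟨j % p, mem_range.mpr (Nat.mod_lt _ hp), hf.map_mod_nat j⟩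
  rw [himage, card_image_of_injOn (by rwa [coe_range]), card_range]

section Bounds

variable {q a h k : ℕ}

theorem lt_mul_pow_mod_of_le (hq : 2 ≤ q) (ha : 0 < a) (hah : a < q ^ h) (hk0 : 0 < k)
    (hkh : k ≤ h) :
    a < a * q ^ k % (q ^ (2 * h) + 1) ∧ a * q ^ k % (q ^ (2 * h) + 1) + a < q ^ (2 * h) + 1 := by
  have hqk : 2 ≤ q ^ k := le_trans hq (Nat.le_self_pow hk0.ne' q)
  have hkh' : q ^ k ≤ q ^ h := Nat.pow_le_pow_right (by omega) hkh
  have hsq : q ^ (2 * h) = q ^ h * q ^ h := by rw [two_mul, pow_add]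
  have hlt : a * q ^ k + a < q ^ (2 * h) + 1 := by
    rw [hsq]; nlinarith [Nat.mul_le_mul_left a hkh']
  rw [Nat.mod_eq_of_lt (by omega)]
  constructor <;> nlinarith

theorem lt_mul_pow_mod_of_two_mul_lt {d : ℕ} (hq : 0 < q) (hd : 0 < d) (hqa : ¬ q ∣ a)
    (hak : 2 * a < q ^ k) :
    a < a * q ^ k % (q ^ (d + k) + 1) ∧ a * q ^ k % (q ^ (d + k) + 1) + a < q ^ (d + k) + 1 := by
  obtain ⟨A, B, hdiv, hB⟩ : ∃ A B, q ^ d * A + B = a ∧ B < q ^ d :=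
    ⟨a / q ^ d, a % q ^ d, Nat.div_add_mod a _, Nat.mod_lt _ (by positivity)⟩
  have hB0 : 0 < B := Nat.pos_of_ne_zero fun h0 =>
    hqa ((dvd_pow_self q hd.ne').trans ⟨A, by omega⟩)
  have hA : A ≤ a := by nlinarith [Nat.one_le_pow d q hq]
  have hBk : q ^ k ≤ B * q ^ k := Nat.le_mul_of_pos_left _ hB0
  have hBk' : B * q ^ k + q ^ k ≤ q ^ (d + k) := by
    rw [pow_add, ← add_one_mul]; exact Nat.mul_le_mul_right _ hB
  have hsplit : a * q ^ k = A * (q ^ (d + k) + 1) + (B * q ^ k - A) := by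
    rw [← hdiv, pow_add]; zify [(by omega : A ≤ B * q ^ k)]; ring
  rw [hsplit, Nat.mul_comm A, Nat.mul_add_mod, Nat.mod_eq_of_lt (by omega)]
  omega

theorem lt_mul_pow_mod_of_lt_two_mul (hq : 2 ≤ q) (hqa : ¬ q ∣ a) (hah : a < q ^ h)
    (hk0 : 0 < k) (hk : k < 2 * h) :
    a < a * q ^ k % (q ^ (2 * h) + 1) ∧ a * q ^ k % (q ^ (2 * h) + 1) + a < q ^ (2 * h) + 1 := by
  rcases le_or_gt k h with hkh | hkh
  · exact lt_mul_pow_mod_of_le hq (Nat.pos_of_not_dvd hqa) hah hk0 hkh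
  · have hak : 2 * a < q ^ k :=
      calc 2 * a < 2 * q ^ h := by omega
        _ ≤ q ^ (h + 1) := by rw [pow_succ, mul_comm]; exact Nat.mul_le_mul_left _ hq
        _ ≤ q ^ k := Nat.pow_le_pow_right (by omega) hkh
    have hdk : 2 * h = (2 * h - k) + k := by omega
    rw [hdk]
    exact lt_mul_pow_mod_of_two_mul_lt (by omega) (by omega) hqa hak

theorem lt_mul_pow_mod_s16 (hq : 2 ≤ q) (hqa : ¬ q ∣ a) (hah : a < q ^ h) (hk0 : 0 < k)
    (hk : k < 2 * (2 * h)) : a < a * q ^ k % (q ^ (2 * h) + 1) := by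
  rcases lt_or_ge k (2 * h) with hk' | hk'
  · exact (lt_mul_pow_mod_of_lt_two_mul hq hqa hah hk0 hk').1
  obtain ⟨j, rfl⟩ : ∃ j, k = j + 2 * h := ⟨k - 2 * h, by omega⟩
  have hj : 0 < a * q ^ j % (q ^ (2 * h) + 1) ∧
      a * q ^ j % (q ^ (2 * h) + 1) + a < q ^ (2 * h) + 1 := by
    rcases j.eq_zero_or_pos with rfl | hj0
    · have hsq : 2 * q ^ h ≤ q ^ (2 * h) := by
        rw [two_mul h, pow_add]
        exact Nat.mul_le_mul_right _ (hq.trans (Nat.le_self_pow (by omega) q))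
      rw [pow_zero, mul_one, Nat.mod_eq_of_lt (show a < q ^ (2 * h) + 1 by omega)]
      exact ⟨Nat.pos_of_not_dvd hqa, by omega⟩
    · have := lt_mul_pow_mod_of_lt_two_mul hq hqa hah hj0 (by omega)
      exact ⟨by omega, this.2⟩
  rw [mul_pow_add_mod q (2 * h) a j hj.1]
  omega

end Bounds

theorem stmt_16_general (q m : ℕ) (hq : IsPrimePow q) (hm : Even m) (hm4 : 4 ≤ m) (a : ℕ)
    (ha2 : a ≤ q ^ (m / 2)) (hqa : ¬ q ∣ a) :
    IsCosetLeader q (q ^ m + 1) a ∧ (cyclCoset q (q ^ m + 1) a).card = 2 * m := by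
  obtain ⟨h, rfl⟩ := hm
  rw [show (h + h) / 2 = h by omega] at ha2
  rw [← two_mul] at hm4 ⊢
  have hq2 := hq.two_le
  have hah : a < q ^ h := ha2.lt_of_ne fun e => hqa (e ▸ dvd_pow_self q (by omega))
  have hqh : q ^ h < q ^ (2 * h) + 1 :=
    Nat.lt_succ_of_le (Nat.pow_le_pow_right (by omega) (by omega))
  have haN : a % (q ^ (2 * h) + 1) = a := Nat.mod_eq_of_lt (hah.trans hqh)
  have hper := periodic_mul_pow_mod q (2 * h) a
  refine ⟨fun j => ?_, ?_⟩
  · rw [← hper.map_mod_nat]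
    rcases (j % (2 * (2 * h))).eq_zero_or_pos with h0 | h0
    · simp only [h0, pow_zero, mul_one, haN, le_refl]
    · exact (lt_mul_pow_mod_s16 hq2 hqa hah h0 (Nat.mod_lt _ (by omega))).le
  · have hn : 2 * (2 * h) ≤ q ^ (2 * h) + 1 :=
      (Nat.mul_le_mul_right _ hq2).trans (Nat.mul_le_pow (by omega) _) |>.trans (Nat.le_succ _)
    refine hper.card_image_range (by omega) hn <| injOn_mul_pow_mod q _ a fun k hk0 hk => ?_
    rw [haN]
    exact (lt_mul_pow_mod_s16 hq2 hqa hah hk0 hk).ne'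

theorem stmt_16 (q m : ℕ) (hq : IsPrimePow q) (hm : Even m) (hm4 : 4 ≤ m) (a : ℕ)
    (ha1 : q ^ (m / 2 - 1) ≤ a) (ha2 : a ≤ q ^ (m / 2)) (hqa : ¬ q ∣ a) :
    IsCosetLeader q (q ^ m + 1) a ∧ (cyclCoset q (q ^ m + 1) a).card = 2 * m :=
  stmt_16_general q m hq hm hm4 a ha2 hqa
end
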